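/- arXiv:1402.4736 — 8 statements merged into one kernel-verified Lean document; each statement's English description precedes it below -/
import Mathlib

section
/- Let G be a locally compact, second countable, Hausdorff, amenable topological group and let (X,G) be a topological dynamical system (X a compact metric space with a jointly continuous left G-action) that is uniquely ergodic with invariant Borel probability measure μ. If A ⊆ X is a Borel set with μ(∂A) = 0, x ∈ X, and Φ is any left Reiter sequence in L¹(G,m), then the density with respect to Φ of the return time set { g ∈ G : g·x ∈ A } exists and equals μ(A). -/
open MeasureTheory Filter Topology Set Pointwise

noncomputable section

section Defs

variable {G : Type*}

/-- The left translate of a bounded continuous function: `(lTrans g f) x = f (g⁻¹ * x)`. -/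
def lTrans [Group G] [TopologicalSpace G] [IsTopologicalGroup G] (g : G)
    (f : BoundedContinuousFunction G ℝ) : BoundedContinuousFunction G ℝ :=
  f.compContinuous ⟨fun x => g⁻¹ * x, continuous_mul_left g⁻¹⟩

/-- Amenability of a topological group: existence of a left-invariant mean on the
bounded continuous real-valued functions. -/
def HasLeftInvariantMean (G : Type*) [Group G] [TopologicalSpace G] [IsTopologicalGroup G] :
    Prop :=
  ∃ Λ : BoundedContinuousFunction G ℝ →ₗ[ℝ] ℝ,
    Λ (BoundedContinuousFunction.const G 1) = 1 ∧
    (∀ f, (∀ x, 0 ≤ f x) → 0 ≤ Λ f) ∧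
    (∀ (g : G) (f : BoundedContinuousFunction G ℝ), Λ (lTrans g f) = Λ f)

/-- A bounded continuous real-valued function on a topological group is almost periodic if
its set of left translates is relatively compact in the sup norm. -/
def AlmostPeriodic [Group G] [TopologicalSpace G] [IsTopologicalGroup G]
    (f : BoundedContinuousFunction G ℝ) : Prop :=
  IsCompact (closure (Set.range fun g : G => lTrans g f))

/-- A subset `S` of a topological group is (left) syndetic if `K * S = G` for some compact `K`. -/
def SyndeticSet [Group G] [TopologicalSpace G] (S : Set G) : Prop :=
  ∃ K : Set G, IsCompact K ∧ K * S = Set.univ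

/-- A subset `T` of a topological group is thick if every compact set has a
right translate inside `T`. -/
def ThickSet [Group G] [TopologicalSpace G] (T : Set G) : Prop :=
  ∀ K : Set G, IsCompact K → ∃ g : G, (fun k => k * g) '' K ⊆ T

/-- A subset `P` of a topological group is piecewise syndetic if `K * P` is thick
for some compact `K`. -/
def PiecewiseSyndeticSet [Group G] [TopologicalSpace G] (P : Set G) : Prop :=
  ∃ K : Set G, IsCompact K ∧ ThickSet (K * P)

/-- The increasing product `g k₁ * ⋯ * g k_m` over `α = {k₁ < ⋯ < k_m}`. -/
def incProd [Group G] (g : ℕ → G) (α : Finset ℕ) : G :=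
  ((α.sort (· ≤ ·)).map g).prod

/-- The decreasing product `g k_m * ⋯ * g k₁` over `α = {k₁ < ⋯ < k_m}`. -/
def decProd [Group G] (g : ℕ → G) (α : Finset ℕ) : G :=
  (((α.sort (· ≤ ·)).map g).reverse).prod

/-- The increasing finite products set determined by the sequence `g`. -/
def FPi [Group G] (g : ℕ → G) : Set G :=
  {x | ∃ α : Finset ℕ, α.Nonempty ∧ x = incProd g α}

/-- The two-sided finite products set determined by the sequence `g`. -/
def FP2 [Group G] (g : ℕ → G) : Set G :=
  {x | ∃ α β : Finset ℕ, Disjoint α β ∧ (α ∪ β).Nonempty ∧ x = incProd g α * decProd g β}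

/-- The von Neumann kernel: the intersection of the kernels of all continuous
finite-dimensional unitary representations. -/
def vnKernel (G : Type*) [Group G] [TopologicalSpace G] : Subgroup G :=
  ⨅ (n : ℕ)
    (φ : G →* unitary (EuclideanSpace ℂ (Fin n) →L[ℂ] EuclideanSpace ℂ (Fin n)))
    (_ : Continuous φ), φ.ker

/-- A topological group is WM (minimally almost periodic) if it has no non-trivial
continuous finite-dimensional unitary representations. -/
def IsWM (G : Type*) [Group G] [TopologicalSpace G] : Prop :=
  ∀ (n : ℕ)
    (φ : G →* unitary (EuclideanSpace ℂ (Fin n) →L[ℂ] EuclideanSpace ℂ (Fin n))),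
    Continuous φ → ∀ g : G, φ g = 1

/-- A topological group is WM-by-compact if it has a closed normal WM subgroup that
is cocompact. -/
def WMByCompact (G : Type*) [Group G] [TopologicalSpace G] : Prop :=
  ∃ H : Subgroup G, H.Normal ∧ IsClosed (H : Set G) ∧ IsWM H ∧ CompactSpace (G ⧸ H)

variable [Group G] [TopologicalSpace G] [MeasurableSpace G]

/-- The ratio `m (E ∩ Φ N) / m (Φ N)`. -/
def densFrac (m : Measure G) (Φ : ℕ → Set G) (E : Set G) (N : ℕ) : ℝ :=
  (m (E ∩ Φ N)).toReal / (m (Φ N)).toReal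

/-- A left Følner sequence: compact positive-measure sets with
`m (Φ N ∩ g • Φ N) / m (Φ N) → 1` uniformly on compact sets of `g`. -/
def IsLeftFolner (m : Measure G) (Φ : ℕ → Set G) : Prop :=
  (∀ N, IsCompact (Φ N)) ∧ (∀ N, 0 < m (Φ N)) ∧
    ∀ K : Set G, IsCompact K → ∀ ε : ℝ, 0 < ε → ∃ N₀ : ℕ, ∀ N ≥ N₀, ∀ g ∈ K,
      |(m (Φ N ∩ g • Φ N)).toReal / (m (Φ N)).toReal - 1| < ε

/-- A right Følner sequence: compact positive-measure sets with
`m (Φ N * g ∩ Φ N) / m (Φ N) → 1` uniformly on compact sets of `g`. -/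
def IsRightFolner (m : Measure G) (Φ : ℕ → Set G) : Prop :=
  (∀ N, IsCompact (Φ N)) ∧ (∀ N, 0 < m (Φ N)) ∧
    ∀ K : Set G, IsCompact K → ∀ ε : ℝ, 0 < ε → ∃ N₀ : ℕ, ∀ N ≥ N₀, ∀ g ∈ K,
      |(m ((fun x => x * g) '' Φ N ∩ Φ N)).toReal / (m (Φ N)).toReal - 1| < ε

/-- A two-sided Følner sequence is both a left and a right Følner sequence. -/
def IsTwoSidedFolner (m : Measure G) (Φ : ℕ → Set G) : Prop :=
  IsLeftFolner m Φ ∧ IsRightFolner m Φ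

/-- Upper density of `E` with respect to a Følner sequence `Φ`. -/
def upperDensSet (m : Measure G) (Φ : ℕ → Set G) (E : Set G) : ℝ :=
  Filter.limsup (densFrac m Φ E) Filter.atTop

/-- Lower density of `E` with respect to a Følner sequence `Φ`. -/
def lowerDensSet (m : Measure G) (Φ : ℕ → Set G) (E : Set G) : ℝ :=
  Filter.liminf (densFrac m Φ E) Filter.atTop

/-- `Δ` is the modular function of the left Haar measure `m`: a continuous positive
homomorphism with `map (· * g) m = Δ g • m`. -/
def IsModularFunction (m : Measure G) (Δ : G → ℝ) : Prop :=
  Continuous Δ ∧ (∀ g, 0 < Δ g) ∧ (∀ g h, Δ (g * h) = Δ g * Δ h) ∧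
    ∀ g : G, Measure.map (fun x => x * g) m = ENNReal.ofReal (Δ g) • m

/-- A left Reiter sequence in `L¹(G, m)`. -/
def IsLeftReiter (m : Measure G) (Φ : ℕ → G → ℝ) : Prop :=
  (∀ N x, 0 ≤ Φ N x) ∧ (∀ N, Integrable (Φ N) m) ∧ (∀ N, ∫ x, Φ N x ∂m = 1) ∧
    ∀ g : G, Tendsto (fun N => ∫ x, |Φ N (g⁻¹ * x) - Φ N x| ∂m) atTop (nhds 0)

/-- A two-sided Reiter sequence in `L¹(G, m)`. -/
def IsTwoSidedReiter (m : Measure G) (Φ : ℕ → G → ℝ) : Prop :=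
  IsLeftReiter m Φ ∧
    ∃ Δ : G → ℝ, IsModularFunction m Δ ∧
      ∀ g : G, Tendsto (fun N => ∫ x, |Δ g * Φ N (x * g) - Φ N x| ∂m) atTop (nhds 0)

/-- Upper density of `E` with respect to a Reiter sequence `Φ`. -/
def upperDensReiter (m : Measure G) (Φ : ℕ → G → ℝ) (E : Set G) : ℝ :=
  Filter.limsup (fun N => ∫ x in E, Φ N x ∂m) Filter.atTop

/-- A substantial subset of `G`: one containing `U * W * U` for some open neighbourhood
`U` of the identity and some measurable `W` of positive upper density with respect to
some two-sided Reiter sequence. -/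
def SubstantialSet (m : Measure G) (S : Set G) : Prop :=
  ∃ U W : Set G, IsOpen U ∧ (1 : G) ∈ U ∧ MeasurableSet W ∧
    (∃ Φ : ℕ → G → ℝ, IsTwoSidedReiter m Φ ∧ 0 < upperDensReiter m Φ W) ∧
    U * W * U ⊆ S

/-- Two-sided upper Banach density. -/
def upperBanachDens (m : Measure G) (E : Set G) : ℝ :=
  sSup {d : ℝ | ∃ Φ : ℕ → G → ℝ, IsTwoSidedReiter m Φ ∧ d = upperDensReiter m Φ E}

/-- A set of measurable recurrence in a topological group. -/
def IsRecurrenceSet (R : Set G) : Prop :=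
  ∀ K : Set G, IsCompact K →
    ∀ (X : Type) [MeasurableSpace X] [MeasurableSpace.CountablyGenerated X]
      (μ : Measure X) [IsProbabilityMeasure μ] (T : G → X → X),
      Measurable (fun p : G × X => T p.1 p.2) →
      (∀ g : G, MeasurePreserving (T g) μ μ) →
      (∀ g h : G, ∀ x : X, T g (T h x) = T (g * h) x) →
      (∀ x : X, T 1 x = x) →
      ∀ A : Set X, MeasurableSet A → 0 < μ A →
        ∃ g ∈ R \ K, 0 < μ (A ∩ T g ⁻¹' A)

end Defs

open scoped BoundedContinuousFunction

/-!
Push `Φ N · m` forward along the orbit map `g ↦ g • x` to get probability measures `ν N` on `X`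
with `ν N A = ∫_{g • x ∈ A} Φ N dm`. Left invariance of `m` turns the Reiter property into
asymptotic invariance of `ν N`; since the space of probability measures on `X` is compact, every
cluster point of `ν N` is then an invariant probability measure, i.e. `μ`. Hence `ν N → μ` weakly,
and the portmanteau theorem gives `ν N A → μ A` because `μ (∂A) = 0`.
-/

theorem measurePreserving_of_forall_integral_comp_eq {X : Type*} [TopologicalSpace X]
    [HasOuterApproxClosed X] [MeasurableSpace X] [BorelSpace X] {S : X → X} (hS : Continuous S)
    (ν : Measure X) [IsFiniteMeasure ν] (h : ∀ f : X →ᵇ ℝ, ∫ y, f (S y) ∂ν = ∫ y, f y ∂ν) :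
    MeasurePreserving S ν ν := by
  refine ⟨hS.measurable, ext_of_forall_integral_eq_of_IsFiniteMeasure fun f => ?_⟩
  rw [integral_map hS.aemeasurable f.continuous.aestronglyMeasurable, h]

theorem tendsto_of_tendsto_integral_comp_sub_integral {X G ι : Type*} [MetricSpace X]
    [CompactSpace X] [MeasurableSpace X] [BorelSpace X] {T : G → X → X}
    (hT : ∀ g, Continuous (T g)) (μ : Measure X) [IsProbabilityMeasure μ]
    (huniq : ∀ ν : Measure X, IsProbabilityMeasure ν →
      (∀ g, MeasurePreserving (T g) ν ν) → ν = μ)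
    {L : Filter ι} {νs : ι → ProbabilityMeasure X}
    (hνs : ∀ g (f : X →ᵇ ℝ),
      Tendsto (fun i => ∫ y, f (T g y) ∂(νs i) - ∫ y, f y ∂(νs i)) L (𝓝 0)) :
    Tendsto νs L (𝓝 ⟨μ, inferInstance⟩) := by
  refine tendsto_nhds_of_unique_mapClusterPt fun ν hν => Subtype.ext ?_
  refine huniq ν inferInstance fun g => measurePreserving_of_forall_integral_comp_eq (hT g) ν
    fun f => ?_
  set D : ProbabilityMeasure X → ℝ :=
    fun ρ => ∫ y, f.compContinuous ⟨T g, hT g⟩ y ∂ρ - ∫ y, f y ∂ρ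
  have hD : Continuous D :=
    (ProbabilityMeasure.continuous_integral_boundedContinuousFunction _).sub
      (ProbabilityMeasure.continuous_integral_boundedContinuousFunction f)
  have hclus : MapClusterPt (D ν) L (D ∘ νs) := hν.continuousAt_comp hD.continuousAt
  have hD0 : D ν = 0 := eq_of_nhds_neBot (Filter.NeBot.mono hclus (inf_le_inf_left _ (hνs g f)))
  exact sub_eq_zero.1 hD0

theorem IsLeftReiter.tendsto_integral_mul_left_sub {G : Type*} [Group G] [TopologicalSpace G]
    [MeasurableSpace G] [MeasurableMul G] {m : Measure G} [m.IsMulLeftInvariant]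
    {Φ : ℕ → G → ℝ} (hΦ : IsLeftReiter m Φ) {F : G → ℝ} {C : ℝ}
    (hF : AEStronglyMeasurable F m) (hFC : ∀ g, ‖F g‖ ≤ C) (h : G) :
    Tendsto (fun N => ∫ g, F (h * g) * Φ N g ∂m - ∫ g, F g * Φ N g ∂m) atTop (𝓝 0) := by
  obtain ⟨-, hΦint, -, hΦreit⟩ := hΦ
  have hΦint' : ∀ N, Integrable (fun g => Φ N (h⁻¹ * g)) m := fun N =>
    (hΦint N).comp_mul_left h⁻¹
  have hdiff : ∀ N, ∫ g, F (h * g) * Φ N g ∂m - ∫ g, F g * Φ N g ∂m =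
      ∫ g, F g * (Φ N (h⁻¹ * g) - Φ N g) ∂m := by
    intro N
    have hshift : ∫ g, F (h * g) * Φ N g ∂m = ∫ g, F g * Φ N (h⁻¹ * g) ∂m := by
      simpa only [inv_mul_cancel_left] using
        integral_mul_left_eq_self (μ := m) (fun g => F g * Φ N (h⁻¹ * g)) h
    rw [hshift, ← integral_sub ((hΦint' N).bdd_mul hF (.of_forall hFC))
      ((hΦint N).bdd_mul hF (.of_forall hFC))]
    simp only [mul_sub]
  have hbound : ∀ N, ‖∫ g, F g * (Φ N (h⁻¹ * g) - Φ N g) ∂m‖ ≤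
      C * ∫ g, |Φ N (h⁻¹ * g) - Φ N g| ∂m := by
    intro N
    rw [← integral_const_mul]
    refine norm_integral_le_of_norm_le (((hΦint' N).sub (hΦint N)).abs.const_mul C)
      (.of_forall fun g => ?_)
    rw [norm_mul, Real.norm_eq_abs (_ - _)]
    exact mul_le_mul_of_nonneg_right (hFC g) (abs_nonneg _)
  simp only [hdiff]
  exact squeeze_zero_norm hbound (by simpa using (hΦreit h).const_mul C)

section DensityPushforward

variable {G X : Type*} [MeasurableSpace G] [MeasurableSpace X] {m : Measure G} {φ : G → ℝ}
  {p : G → X}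

def densityPushforward (m : Measure G) (φ : G → ℝ) (p : G → X) : Measure X :=
  (m.withDensity fun g => ENNReal.ofReal (φ g)).map p

theorem densityPushforward_apply (hφ0 : 0 ≤ᵐ[m] φ) (hφ : Integrable φ m) (hp : Measurable p)
    {s : Set X} (hs : MeasurableSet s) :
    densityPushforward m φ p s = ENNReal.ofReal (∫ g in p ⁻¹' s, φ g ∂m) := by
  rw [densityPushforward, Measure.map_apply hp hs, withDensity_apply _ (hp hs),
    ofReal_integral_eq_lintegral_ofReal hφ.integrableOn (ae_restrict_of_ae hφ0)]

theorem isProbabilityMeasure_densityPushforward (hφ0 : 0 ≤ᵐ[m] φ) (hφ : Integrable φ m)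
    (hφ1 : ∫ g, φ g ∂m = 1) (hp : Measurable p) :
    IsProbabilityMeasure (densityPushforward m φ p) :=
  ⟨by rw [densityPushforward_apply hφ0 hφ hp .univ, Set.preimage_univ, setIntegral_univ, hφ1,
    ENNReal.ofReal_one]⟩

theorem integral_densityPushforward (hφ0 : 0 ≤ᵐ[m] φ) (hφ : AEMeasurable φ m)
    (hp : Measurable p) {f : X → ℝ} (hf : StronglyMeasurable f) :
    ∫ y, f y ∂(densityPushforward m φ p) = ∫ g, f (p g) * φ g ∂m := by
  rw [densityPushforward, integral_map hp.aemeasurable hf.aestronglyMeasurable,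
    integral_withDensity_eq_integral_toReal_smul₀ hφ.ennreal_ofReal
      (.of_forall fun _ => ENNReal.ofReal_lt_top)]
  refine integral_congr_ae (hφ0.mono fun g hg => ?_)
  simp only [ENNReal.toReal_ofReal hg, smul_eq_mul, mul_comm]

end DensityPushforward

theorem statement10_general {G : Type} [Group G] [TopologicalSpace G] [IsTopologicalGroup G]
    [MeasurableSpace G] [BorelSpace G]
    (m : Measure G) [m.IsHaarMeasure]
    {X : Type} [MetricSpace X] [CompactSpace X] [MeasurableSpace X] [BorelSpace X]
    (a : G → X → X) (hcont : Continuous fun p : G × X => a p.1 p.2)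
    (hmul : ∀ g h : G, ∀ x : X, a g (a h x) = a (g * h) x)
    (μ : Measure X) [IsProbabilityMeasure μ]
    (huniq : ∀ ν : Measure X, IsProbabilityMeasure ν →
      (∀ g : G, MeasurePreserving (a g) ν ν) → ν = μ)
    (A : Set X) (hA : MeasurableSet A) (hbd : μ (frontier A) = 0)
    (x : X) (Φ : ℕ → G → ℝ) (hΦ : IsLeftReiter m Φ) :
    Tendsto (fun N => ∫ g in {g : G | a g x ∈ A}, Φ N g ∂m) atTop
      (nhds (μ A).toReal) := by
  obtain ⟨hΦ0, hΦint, hΦ1, -⟩ := id hΦ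
  have horbit : Continuous fun g => a g x := hcont.comp (continuous_id.prodMk continuous_const)
  have hact : ∀ h, Continuous (a h) := fun h => hcont.comp (continuous_const.prodMk continuous_id)
  let ν : ℕ → ProbabilityMeasure X := fun N =>
    ⟨densityPushforward m (Φ N) (a · x), isProbabilityMeasure_densityPushforward
      (.of_forall (hΦ0 N)) (hΦint N) (hΦ1 N) horbit.measurable⟩
  have hν_coe : ∀ N, (ν N : Measure X) = densityPushforward m (Φ N) (a · x) := fun N => rfl
  have hν : Tendsto ν atTop (𝓝 ⟨μ, inferInstance⟩) := by
    refine tendsto_of_tendsto_integral_comp_sub_integral hact μ huniq fun h f => ?_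
    have hReiter := hΦ.tendsto_integral_mul_left_sub
      (f.continuous.comp horbit).aestronglyMeasurable (fun g => f.norm_coe_le_norm (a g x)) h
    have hintegral : ∀ N {F : X → ℝ}, Continuous F →
        ∫ y, F y ∂(ν N) = ∫ g, F (a g x) * Φ N g ∂m :=
      fun N F hF => integral_densityPushforward (.of_forall (hΦ0 N)) (hΦint N).aemeasurable
        horbit.measurable hF.stronglyMeasurable
    simpa only [hintegral _ f.continuous, Function.comp_apply, hmul,
      hintegral _ (F := fun y => f (a h y)) (f.continuous.comp (hact h))] using hReiter
  have hνA := ProbabilityMeasure.tendsto_measure_of_null_frontier_of_tendsto' hν hbd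
  convert (ENNReal.tendsto_toReal (measure_ne_top μ A)).comp hνA using 2 with N
  rw [Function.comp_apply, hν_coe, densityPushforward_apply (.of_forall (hΦ0 N)) (hΦint N)
    horbit.measurable hA, ENNReal.toReal_ofReal (setIntegral_nonneg (horbit.measurable hA)
      fun g _ => hΦ0 N g)]
  rfl

/-- If `(X, G)` is a uniquely ergodic topological dynamical system with
invariant Borel probability measure `μ`, `A` a Borel set with `μ(∂A) = 0`, `x ∈ X`,
and `Φ` a left Reiter sequence, then the density of the return time set
`{g : g • x ∈ A}` with respect to `Φ` exists and equals `μ A`. -/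
theorem statement10 {G : Type} [Group G] [TopologicalSpace G] [IsTopologicalGroup G]
    [LocallyCompactSpace G] [SecondCountableTopology G] [T2Space G]
    [MeasurableSpace G] [BorelSpace G]
    (m : Measure G) [m.IsHaarMeasure]
    (hAmen : HasLeftInvariantMean G)
    {X : Type} [MetricSpace X] [CompactSpace X] [MeasurableSpace X] [BorelSpace X]
    (a : G → X → X) (hcont : Continuous fun p : G × X => a p.1 p.2)
    (hone : ∀ x : X, a 1 x = x) (hmul : ∀ g h : G, ∀ x : X, a g (a h x) = a (g * h) x)
    (μ : Measure X) [IsProbabilityMeasure μ]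
    (hinv : ∀ g : G, MeasurePreserving (a g) μ μ)
    (huniq : ∀ ν : Measure X, IsProbabilityMeasure ν →
      (∀ g : G, MeasurePreserving (a g) ν ν) → ν = μ)
    (A : Set X) (hA : MeasurableSet A) (hbd : μ (frontier A) = 0)
    (x : X) (Φ : ℕ → G → ℝ) (hΦ : IsLeftReiter m Φ) :
    Tendsto (fun N => ∫ g in {g : G | a g x ∈ A}, Φ N g ∂m) atTop
      (nhds (μ A).toReal) :=
  statement10_general m a hcont hmul μ huniq A hA hbd x Φ hΦ
end
end

section
/- Let G be a countable, infinite discrete group. A subset R of G is a set of measurable recurrence if and only if for every measure-preserving action T of G on a separable probability space (X,𝓑,μ) and every B ∈ 𝓑 with μ(B) > 0 there exists r ∈ R ∖ {id} with μ(B ∩ T^r B) > 0. -/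
open MeasureTheory Filter Topology Set Pointwise

noncomputable section

/-- A set of measurable recurrence in a countable discrete group: compact sets are
the finite sets. -/
def DRecurrenceSet {G : Type} [Group G] [MeasurableSpace G] (R : Set G) : Prop :=
  ∀ K : Set G, K.Finite →
    ∀ (X : Type) [MeasurableSpace X] [MeasurableSpace.CountablyGenerated X]
      (μ : Measure X) [IsProbabilityMeasure μ] (T : G → X → X),
      Measurable (fun p : G × X => T p.1 p.2) →
      (∀ g : G, MeasurePreserving (T g) μ μ) →
      (∀ g h : G, ∀ x : X, T g (T h x) = T (g * h) x) →
      (∀ x : X, T 1 x = x) →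
      ∀ A : Set X, MeasurableSet A → 0 < μ A →
        ∃ g ∈ R \ K, 0 < μ (A ∩ T g ⁻¹' A)

/-!
Returns along `R ∖ {1}` are upgraded to returns along `R ∖ K` by taking the product of the
given system with the Bernoulli shift on `Bool ^ G`. The cylinder `C` prescribing the value
`true` at `1` and `false` on the rest of `K` is disjoint from its preimage under the shift by
any `k ∈ K ∖ {1}`, so a return time of `A ×ˢ C` lies outside `K` and is a return time of `A`.
-/

structure IsMeasurePreservingAction {G X : Type*} [Group G] [MeasurableSpace G]
    [MeasurableSpace X] (μ : Measure X) (T : G → X → X) : Prop where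
  measurable : Measurable fun p : G × X => T p.1 p.2
  measurePreserving : ∀ g, MeasurePreserving (T g) μ μ
  map_mul : ∀ g h x, T g (T h x) = T (g * h) x
  map_one : ∀ x, T 1 x = x

lemma IsMeasurePreservingAction.prodMap {G X Y : Type*} [Group G] [MeasurableSpace G]
    [Countable G] [MeasurableSingletonClass G] [MeasurableSpace X] [MeasurableSpace Y]
    {μ : Measure X} {ν : Measure Y} [SFinite μ] [SFinite ν] {T : G → X → X} {S : G → Y → Y}
    (hT : IsMeasurePreservingAction μ T) (hS : IsMeasurePreservingAction ν S) :
    IsMeasurePreservingAction (μ.prod ν) fun g => Prod.map (T g) (S g) where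
  measurable := measurable_from_prod_countable_right fun g =>
    (hT.measurePreserving g).measurable.prodMap (hS.measurePreserving g).measurable
  measurePreserving g := (hT.measurePreserving g).prod (hS.measurePreserving g)
  map_mul g h p := Prod.ext (hT.map_mul g h p.1) (hS.map_mul g h p.2)
  map_one p := Prod.ext (hT.map_one p.1) (hS.map_one p.2)

lemma MeasureTheory.Measure.prod_inter_preimage_prodMap {X Y : Type*} [MeasurableSpace X]
    [MeasurableSpace Y] (μ : Measure X) (ν : Measure Y) [SFinite ν] (f : X → X) (g : Y → Y)
    (A : Set X) (C : Set Y) :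
    μ.prod ν (A ×ˢ C ∩ Prod.map f g ⁻¹' (A ×ˢ C)) = μ (A ∩ f ⁻¹' A) * ν (C ∩ g ⁻¹' C) := by
  rw [preimage_prod_map_prod, prod_inter_prod, Measure.prod_prod]

section LeftShift

variable {G α : Type*} [Group G]

def leftShift (g : G) (ω : G → α) : G → α := fun x => ω (g⁻¹ * x)

@[simp]
lemma leftShift_apply (g : G) (ω : G → α) (x : G) : leftShift g ω x = ω (g⁻¹ * x) := rfl

lemma leftShift_leftShift (g h : G) (ω : G → α) :
    leftShift g (leftShift h ω) = leftShift (g * h) ω := by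
  ext x
  simp [mul_assoc]

lemma leftShift_one (ω : G → α) : leftShift 1 ω = ω := by
  ext x
  simp

variable [MeasurableSpace α]

lemma leftShift_eq_piCongrLeft (g : G) :
    leftShift g = MeasurableEquiv.piCongrLeft (fun _ : G => α) (Equiv.mulLeft g) := by
  ext ω x
  rw [MeasurableEquiv.coe_piCongrLeft, Equiv.piCongrLeft_apply_eq_cast, cast_eq]
  rfl

lemma measurePreserving_leftShift [Countable G] (ρ : Measure α) [IsProbabilityMeasure ρ]
    (g : G) :
    MeasurePreserving (leftShift g) (Measure.infinitePi fun _ : G => ρ)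
      (Measure.infinitePi fun _ : G => ρ) := by
  rw [leftShift_eq_piCongrLeft]
  exact ⟨MeasurableEquiv.measurable _, Measure.infinitePi_map_piCongrLeft (fun _ : G => ρ) _⟩

lemma isMeasurePreservingAction_leftShift [MeasurableSpace G] [Countable G]
    [MeasurableSingletonClass G] (ρ : Measure α) [IsProbabilityMeasure ρ] :
    IsMeasurePreservingAction (Measure.infinitePi fun _ : G => ρ) (leftShift (α := α)) where
  measurable := measurable_from_prod_countable_right fun g =>
    (measurePreserving_leftShift ρ g).measurable
  measurePreserving := measurePreserving_leftShift ρ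
  map_mul := leftShift_leftShift
  map_one := leftShift_one

end LeftShift

section MarkedCylinder

variable {G : Type*} [Group G] [DecidableEq G]

def markedCylinder (s : Finset G) : Set (G → Bool) :=
  (s : Set G).pi fun x => {decide (x = 1)}

lemma measurableSet_markedCylinder (s : Finset G) : MeasurableSet (markedCylinder s) :=
  .pi s.countable_toSet fun _ _ => measurableSet_singleton _

lemma disjoint_markedCylinder_preimage_leftShift {s : Finset G} (h1 : 1 ∈ s) {k : G}
    (hk : k ∈ s) (hk1 : k ≠ 1) :
    Disjoint (markedCylinder s) (leftShift k ⁻¹' markedCylinder s) := by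
  refine disjoint_left.2 fun ω hω hkω => ?_
  have hω1 : ω 1 = true := by simpa using hω 1 h1
  have hωk : ω (k⁻¹ * k) = false := by simpa [hk1] using hkω k hk
  simp [hω1] at hωk

lemma infinitePi_markedCylinder_pos (ρ : Measure Bool) [IsProbabilityMeasure ρ]
    (hρ : ∀ b, ρ {b} ≠ 0) (s : Finset G) :
    0 < Measure.infinitePi (fun _ : G => ρ) (markedCylinder s) := by
  rw [markedCylinder, Measure.infinitePi_pi _ fun _ _ => measurableSet_singleton _]
  exact pos_iff_ne_zero.2 (Finset.prod_ne_zero_iff.2 fun x _ => hρ _)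

end MarkedCylinder

theorem statement12_general {G : Type} [Group G] [Countable G]
    [MeasurableSpace G] [DiscreteMeasurableSpace G] (R : Set G) :
    DRecurrenceSet R ↔
      ∀ (X : Type) [MeasurableSpace X] [MeasurableSpace.CountablyGenerated X]
        (μ : Measure X) [IsProbabilityMeasure μ] (T : G → X → X),
        Measurable (fun p : G × X => T p.1 p.2) →
        (∀ g : G, MeasurePreserving (T g) μ μ) →
        (∀ g h : G, ∀ x : X, T g (T h x) = T (g * h) x) →
        (∀ x : X, T 1 x = x) →
        ∀ B : Set X, MeasurableSet B → 0 < μ B →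
          ∃ r ∈ R \ {(1 : G)}, 0 < μ (B ∩ T r ⁻¹' B) := by
  classical
  refine ⟨fun h X _ _ μ _ T hTm hTp hTmul hT1 =>
    h {1} (finite_singleton 1) X μ T hTm hTp hTmul hT1, ?_⟩
  intro h K hK X _ _ μ _ T hTm hTp hTmul hT1 A hA hApos
  set ρ : Measure Bool := (PMF.uniformOfFintype Bool).toMeasure
  set s : Finset G := insert 1 hK.toFinset
  have hP := (IsMeasurePreservingAction.mk hTm hTp hTmul hT1).prodMap
    (isMeasurePreservingAction_leftShift (G := G) ρ)
  have hC : 0 < μ.prod (Measure.infinitePi fun _ : G => ρ) (A ×ˢ markedCylinder s) := by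
    rw [Measure.prod_prod]
    exact ENNReal.mul_pos hApos.ne'
      (infinitePi_markedCylinder_pos ρ (fun b => by simp [ρ]) s).ne'
  obtain ⟨r, ⟨hrR, hr1⟩, hr⟩ := h _ _ _ hP.measurable hP.measurePreserving hP.map_mul
    hP.map_one _ (hA.prod (measurableSet_markedCylinder s)) hC
  rw [Measure.prod_inter_preimage_prodMap, ENNReal.mul_pos_iff] at hr
  refine ⟨r, ⟨hrR, fun hrK => ?_⟩, hr.1⟩
  have hdisj : Disjoint (markedCylinder s) (leftShift r ⁻¹' markedCylinder s) :=
    disjoint_markedCylinder_preimage_leftShift (Finset.mem_insert_self 1 _)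
      (Finset.mem_insert_of_mem (hK.mem_toFinset.2 hrK)) hr1
  rw [hdisj.inter_eq, measure_empty] at hr
  exact lt_irrefl 0 hr.2

/-- In a countable, infinite, discrete group, a set `R` is a set of
measurable recurrence if and only if for every measure-preserving action on a separable
probability space and every positive-measure set `B` there is `r ∈ R ∖ {1}` with
`μ (B ∩ T r ⁻¹' B) > 0`. -/
theorem statement12 {G : Type} [Group G] [Countable G] [Infinite G]
    [MeasurableSpace G] [DiscreteMeasurableSpace G] (R : Set G) :
    DRecurrenceSet R ↔
      ∀ (X : Type) [MeasurableSpace X] [MeasurableSpace.CountablyGenerated X]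
        (μ : Measure X) [IsProbabilityMeasure μ] (T : G → X → X),
        Measurable (fun p : G × X => T p.1 p.2) →
        (∀ g : G, MeasurePreserving (T g) μ μ) →
        (∀ g h : G, ∀ x : X, T g (T h x) = T (g * h) x) →
        (∀ x : X, T 1 x = x) →
        ∀ B : Set X, MeasurableSet B → 0 < μ B →
          ∃ r ∈ R \ {(1 : G)}, 0 < μ (B ∩ T r ⁻¹' B) :=
  statement12_general R
end
end

section
/- Let G be a locally compact, second countable, Hausdorff topological group and let P ⊆ G be such that for every neighborhood U of the identity the set UP contains an increasing finite products set FPi(g_n) for some sequence g_n in G with g_n → ∞. Then P is a set of measurable recurrence. -/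
open MeasureTheory Filter Topology Set Pointwise

noncomputable section

/-!
The displacement `ψ g = μ (T g ⁻¹' A ∆ A)` is measurable, symmetric and subadditive in `g`, and
since the measure algebra of `X` is separable, countably many left translates of each sublevel
set `{ψ < δ}` cover `G`; by Steinhaus' theorem every sublevel set `{ψ < ε}` is then a
neighbourhood of the identity. Take `U = {ψ < μ(A)² / 8} ∩ K₀` with `K₀` a compact neighbourhood
of `1`, and pass to a subsequence of `u` none of whose finite products lies in `K₀ * K`. Among
the sets `T (bᵢ)⁻¹ ⁻¹' A`, where `bᵢ = u₀ ⋯ uᵢ₋₁`, a Bonferroni count finds two meeting in measure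
more than `μ(A)² / 8`, i.e. some `x = bᵢ⁻¹ bⱼ ∈ FPi u` with `μ (A ∩ T x ⁻¹' A) > μ(A)² / 8`.
Writing `x = v p` with `v ∈ U` and `p ∈ P`, we get `p ∉ K`, and replacing `x` by `p` loses
at most `ψ v < μ(A)² / 8`.
-/

open scoped symmDiff

section IncProd

variable {G : Type*} [Group G]

@[simp]
lemma incProd_empty (g : ℕ → G) : incProd g ∅ = 1 := by
  simp [incProd]

lemma incProd_insert_of_forall_lt (g : ℕ → G) {s : Finset ℕ} {m : ℕ} (h : ∀ b ∈ s, b < m) :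
    incProd g (insert m s) = incProd g s * g m := by
  have hlt : (s.sort (· ≤ ·) ++ [m]).Pairwise (· < ·) :=
    List.pairwise_append.2 ⟨(Finset.sortedLT_sort s).pairwise, List.pairwise_singleton _ _,
      fun x hx y hy => (List.mem_singleton.1 hy) ▸ h x ((Finset.mem_sort _).1 hx)⟩
  have hsort : (insert m s).sort (· ≤ ·) = s.sort (· ≤ ·) ++ [m] := by
    rw [← (List.toFinset_sort _ (hlt.imp ne_of_lt)).2 (hlt.imp le_of_lt)]
    simp
  simp [incProd, hsort]

lemma incProd_comp_of_strictMono (g : ℕ → G) {n : ℕ → ℕ} (hn : StrictMono n) (α : Finset ℕ) :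
    incProd (g ∘ n) α = incProd g (α.image n) := by
  have hsort := Finset.map_sort ⟨n, hn.injective⟩ α (· ≤ ·) (· ≤ ·)
    fun _ _ _ _ => hn.le_iff_le.symm
  rw [Finset.map_eq_image] at hsort
  rw [incProd, incProd, ← List.map_map]
  exact congrArg (fun l => (l.map g).prod) hsort

lemma FPi_comp_subset (g : ℕ → G) {n : ℕ → ℕ} (hn : StrictMono n) : FPi (g ∘ n) ⊆ FPi g := by
  rintro _ ⟨α, hα, rfl⟩
  exact ⟨α.image n, hα.image n, incProd_comp_of_strictMono g hn α⟩

lemma incProd_range_eq_mul_Ico (g : ℕ → G) {i j : ℕ} (hij : i ≤ j) :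
    incProd g (Finset.range j) = incProd g (Finset.range i) * incProd g (Finset.Ico i j) := by
  induction j, hij using Nat.le_induction with
  | base => simp
  | succ j hij ih =>
    rw [Finset.range_add_one, Nat.Ico_succ_right_eq_insert_Ico hij,
      incProd_insert_of_forall_lt g fun b hb => Finset.mem_range.1 hb,
      incProd_insert_of_forall_lt g fun b hb => (Finset.mem_Ico.1 hb).2, ih, mul_assoc]

end IncProd

lemma exists_strictMono_disjoint_FPi {G : Type*} [Group G] [TopologicalSpace G]
    [IsTopologicalGroup G] {u : ℕ → G} (hu : Tendsto u atTop (cocompact G)) {K : Set G}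
    (hK : IsCompact K) : ∃ n : ℕ → ℕ, StrictMono n ∧ Disjoint (FPi (u ∘ n)) K := by
  classical
  set C : ℕ → Set G := fun m =>
    ⋃ β ∈ (Finset.range (m + 1)).powerset, (incProd u β * ·) ⁻¹' K
  have hC : ∀ m, IsCompact (C m) := fun m => Finset.isCompact_biUnion _ fun _ _ =>
    (Homeomorph.mulLeft _).isCompact_preimage.2 hK
  -- `u m' ∉ C m` keeps every product of terms of index `≤ m`, followed by `u m'`, out of `K`.
  -- This is a condition on pairs of chosen indices, so the subsequence can be built greedily.
  obtain ⟨n, hnK, hn⟩ := exists_seq_of_forall_finset_exists (fun m => u m ∉ K)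
      (fun m m' => m < m' ∧ u m' ∉ C m) fun s _ => by
    have hKs : IsCompact (K ∪ ⋃ m ∈ s, C m) := hK.union (s.isCompact_biUnion fun m _ => hC m)
    obtain ⟨m', hm'K, hm's⟩ := ((hasBasis_cocompact.tendsto_right_iff.1 hu _ hKs).and
      (eventually_gt_atTop (s.sup id))).exists
    exact ⟨m', fun h => hm'K (Or.inl h), fun m hm =>
      ⟨(Finset.le_sup (f := id) hm).trans_lt hm's, fun h => hm'K (Or.inr (mem_biUnion hm h))⟩⟩
  have hmono : StrictMono n := fun a b h => (hn a b h).1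
  refine ⟨n, hmono, Set.disjoint_left.2 ?_⟩
  rintro _ ⟨α, hα, rfl⟩
  set a := α.max' hα
  have hlt : ∀ b ∈ α.erase a, b < a := fun b hb =>
    (α.le_max' b (Finset.mem_of_mem_erase hb)).lt_of_ne (Finset.ne_of_mem_erase hb)
  rw [← Finset.insert_erase (α.max'_mem hα), incProd_insert_of_forall_lt _ hlt]
  rcases (α.erase a).eq_empty_or_nonempty with hs | hs
  · simpa [hs] using hnK a
  · set b := (α.erase a).max' hs
    rw [incProd_comp_of_strictMono u hmono]
    refine fun hK' => (hn b a (hlt b ((α.erase a).max'_mem hs))).2 (mem_biUnion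
      (Finset.mem_powerset.2 fun x hx => ?_) hK')
    obtain ⟨y, hy, rfl⟩ := Finset.mem_image.1 hx
    exact Finset.mem_range_succ_iff.2 (hmono.monotone ((α.erase a).le_max' y hy))

namespace MeasureTheory

variable {X : Type*} [MeasurableSpace X] {μ : Measure X}

lemma sum_measureReal_le_biUnion_add_sum_inter [IsFiniteMeasure μ] {s : ℕ → Set X}
    (hs : ∀ i, MeasurableSet (s i)) (n : ℕ) :
    ∑ i ∈ Finset.range n, μ.real (s i) ≤ μ.real (⋃ i ∈ Finset.range n, s i) +
      ∑ i ∈ Finset.range n, ∑ j ∈ Finset.range i, μ.real (s i ∩ s j) := by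
  induction n with
  | zero => simp
  | succ n ih =>
    have hinter : μ.real ((⋃ j ∈ Finset.range n, s j) ∩ s n) ≤
        ∑ j ∈ Finset.range n, μ.real (s n ∩ s j) := by
      simp_rw [Set.iUnion₂_inter, Set.inter_comm _ (s n)]
      exact measureReal_biUnion_finset_le _ _
    have hunion := measureReal_union_add_inter (s := ⋃ j ∈ Finset.range n, s j) (hs n)
      (measure_ne_top μ _) (measure_ne_top μ _)
    rw [Finset.sum_range_succ, Finset.sum_range_succ, Finset.range_add_one,
      Finset.set_biUnion_insert, Set.union_comm]
    linarith

lemma exists_lt_measureReal_inter [IsProbabilityMeasure μ] {s : ℕ → Set X}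
    (hs : ∀ i, MeasurableSet (s i)) {a : ℝ} (ha : 0 < a) (has : ∀ i, a ≤ μ.real (s i)) :
    ∃ i j, i < j ∧ a ^ 2 / 8 < μ.real (s j ∩ s i) := by
  -- For `n = ⌈4 / a⌉` sets, Bonferroni gives `n a ≤ 1 + (n a)² / 8`, false for `4 ≤ n a < 5`.
  by_contra! h
  set n := ⌈4 / a⌉₊
  have hsum : n * a ≤ ∑ i ∈ Finset.range n, μ.real (s i) := by
    simpa using Finset.sum_le_sum fun i (_ : i ∈ Finset.range n) => has i
  have hpairs : ∑ i ∈ Finset.range n, ∑ j ∈ Finset.range i, μ.real (s i ∩ s j) ≤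
      n * (n * (a ^ 2 / 8)) := by
    refine (Finset.sum_le_card_nsmul _ _ (n * (a ^ 2 / 8)) fun i hi => ?_).trans (by simp)
    refine (Finset.sum_le_card_nsmul _ _ (a ^ 2 / 8) fun j hj => ?_).trans ?_
    · exact h j i (Finset.mem_range.1 hj)
    · simpa using mul_le_mul_of_nonneg_right (Nat.cast_le.2 (Finset.mem_range.1 hi).le)
        (by positivity : (0 : ℝ) ≤ a ^ 2 / 8)
  have hunion : μ.real (⋃ i ∈ Finset.range n, s i) ≤ 1 := measureReal_le_one (μ := μ)
  have hn₁ : 4 ≤ n * a := (div_le_iff₀ ha).1 (Nat.le_ceil _)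
  have hn₂ : n * a < 4 + a := by
    nlinarith [Nat.ceil_lt_add_one (by positivity : 0 ≤ 4 / a), div_mul_cancel₀ 4 ha.ne']
  have ha₁ : a ≤ 1 := (has 0).trans (measureReal_le_one (μ := μ))
  nlinarith [sum_measureReal_le_biUnion_add_sum_inter (μ := μ) hs n]

lemma exists_countable_forall_measureReal_symmDiff_lt [IsFiniteMeasure μ] [IsSeparable μ]
    {ι : Type*} [Nonempty ι] {F : ι → Set X} (hF : ∀ i, MeasurableSet (F i)) {δ : ℝ}
    (hδ : 0 < δ) : ∃ S : Set ι, S.Countable ∧ ∀ i, ∃ j ∈ S, μ.real (F j ∆ F i) < δ := by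
  obtain ⟨𝒜, h𝒜c, h𝒜⟩ := exists_countable_measureDense (μ := μ)
  have hsel : ∀ t, ∃ j, (∃ i, μ.real (F i ∆ t) < δ / 2) → μ.real (F j ∆ t) < δ / 2 := by
    intro t
    by_cases ht : ∃ i, μ.real (F i ∆ t) < δ / 2
    · obtain ⟨i, hi⟩ := ht
      exact ⟨i, fun _ => hi⟩
    · exact ⟨Classical.arbitrary ι, fun h => absurd h ht⟩
  choose sel hsel using hsel
  refine ⟨sel '' 𝒜, h𝒜c.image sel, fun i => ?_⟩
  obtain ⟨t, ht, hit⟩ := h𝒜.approx (F i) (hF i) (measure_ne_top μ _) (δ / 2) (half_pos hδ)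
  have hit : μ.real (F i ∆ t) < δ / 2 := ENNReal.toReal_lt_of_lt_ofReal hit
  refine ⟨sel t, mem_image_of_mem sel ht, ?_⟩
  calc μ.real (F (sel t) ∆ F i) ≤ μ.real (F (sel t) ∆ t) + μ.real (t ∆ F i) :=
        measureReal_symmDiff_le _
    _ < δ / 2 + δ / 2 := add_lt_add (hsel t ⟨i, hit⟩) (by rwa [symmDiff_comm])
    _ = δ := add_halves δ

end MeasureTheory

section MeasurePreservingAction

variable {G X : Type*} [Group G] {T : G → X → X}

lemma preimage_act_mul (hmul : ∀ g h : G, ∀ x : X, T g (T h x) = T (g * h) x) (g h : G)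
    (S : Set X) : T (g * h) ⁻¹' S = T h ⁻¹' (T g ⁻¹' S) := by
  ext x
  simp [hmul]

variable [MeasurableSpace X] {μ : Measure X} {A : Set X}
  (hmp : ∀ g : G, MeasurePreserving (T g) μ μ)
  (hmul : ∀ g h : G, ∀ x : X, T g (T h x) = T (g * h) x)
include hmp hmul

lemma measureReal_preimage_symmDiff_preimage (hA : MeasurableSet A) (x y : G) :
    μ.real ((T x ⁻¹' A) ∆ (T y ⁻¹' A)) = μ.real ((T (x * y⁻¹) ⁻¹' A) ∆ A) := by
  rw [← (hmp y).measureReal_preimage (((hmp _).measurable hA).symmDiff hA).nullMeasurableSet,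
    preimage_symmDiff, ← preimage_act_mul hmul, inv_mul_cancel_right]

lemma measureReal_preimage_inter_preimage (hA : MeasurableSet A) (x y : G) :
    μ.real (T x ⁻¹' A ∩ T y ⁻¹' A) = μ.real (A ∩ T (y * x⁻¹) ⁻¹' A) := by
  rw [← (hmp x).measureReal_preimage (hA.inter ((hmp _).measurable hA)).nullMeasurableSet,
    preimage_inter, ← preimage_act_mul hmul, inv_mul_cancel_right]

lemma measureReal_preimage_inv_symmDiff (h1 : ∀ x : X, T 1 x = x) (hA : MeasurableSet A)
    (g : G) : μ.real ((T g⁻¹ ⁻¹' A) ∆ A) = μ.real ((T g ⁻¹' A) ∆ A) := by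
  have hT1 : T 1 ⁻¹' A = A := by ext x; simp [h1]
  rw [← one_mul g⁻¹, ← measureReal_preimage_symmDiff_preimage hmp hmul hA, hT1, symmDiff_comm]

lemma measureReal_preimage_mul_symmDiff_le [IsFiniteMeasure μ] (hA : MeasurableSet A)
    (g h : G) :
    μ.real ((T (g * h) ⁻¹' A) ∆ A) ≤ μ.real ((T g ⁻¹' A) ∆ A) + μ.real ((T h ⁻¹' A) ∆ A) :=
  calc μ.real ((T (g * h) ⁻¹' A) ∆ A)
      ≤ μ.real ((T (g * h) ⁻¹' A) ∆ (T h ⁻¹' A)) + μ.real ((T h ⁻¹' A) ∆ A) :=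
        measureReal_symmDiff_le _
    _ = μ.real ((T g ⁻¹' A) ∆ A) + μ.real ((T h ⁻¹' A) ∆ A) := by
        rw [measureReal_preimage_symmDiff_preimage hmp hmul hA, mul_inv_cancel_right]

lemma measureReal_inter_preimage_mul_le [IsFiniteMeasure μ] (hA : MeasurableSet A) (v p : G) :
    μ.real (A ∩ T (v * p) ⁻¹' A) ≤ μ.real (A ∩ T p ⁻¹' A) + μ.real ((T v ⁻¹' A) ∆ A) := by
  have hsub : A ∩ T (v * p) ⁻¹' A ⊆ (A ∩ T p ⁻¹' A) ∪ T p ⁻¹' ((T v ⁻¹' A) ∆ A) := by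
    rintro x ⟨hxA, hx⟩
    rw [preimage_act_mul hmul] at hx
    by_cases hxp : T p x ∈ A
    · exact Or.inl ⟨hxA, hxp⟩
    · exact Or.inr (Or.inl ⟨hx, hxp⟩)
  calc μ.real (A ∩ T (v * p) ⁻¹' A)
      ≤ μ.real (A ∩ T p ⁻¹' A) + μ.real (T p ⁻¹' ((T v ⁻¹' A) ∆ A)) :=
        (measureReal_mono hsub).trans (measureReal_union_le _ _)
    _ = μ.real (A ∩ T p ⁻¹' A) + μ.real ((T v ⁻¹' A) ∆ A) := by
        rw [(hmp p).measureReal_preimage (((hmp v).measurable hA).symmDiff hA).nullMeasurableSet]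

lemma exists_mem_FPi_lt_measureReal_inter_preimage [IsProbabilityMeasure μ]
    (hA : MeasurableSet A) (hApos : 0 < μ.real A) (w : ℕ → G) :
    ∃ x ∈ FPi w, μ.real A ^ 2 / 8 < μ.real (A ∩ T x ⁻¹' A) := by
  obtain ⟨i, j, hij, hlt⟩ := exists_lt_measureReal_inter
    (s := fun i => T (incProd w (Finset.range i))⁻¹ ⁻¹' A) (fun i => (hmp _).measurable hA)
    hApos fun i => ((hmp _).measureReal_preimage hA.nullMeasurableSet).ge
  refine ⟨incProd w (Finset.Ico i j), ⟨_, Finset.nonempty_Ico.2 hij, rfl⟩, ?_⟩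
  rwa [measureReal_preimage_inter_preimage hmp hmul hA, inv_inv,
    incProd_range_eq_mul_Ico w hij.le, inv_mul_cancel_left] at hlt

end MeasurePreservingAction

lemma measurable_measureReal_preimage_symmDiff {G X : Type*} [MeasurableSpace G]
    [MeasurableSpace X] {μ : Measure X} [SFinite μ] {T : G → X → X}
    (hT : Measurable fun p : G × X => T p.1 p.2) {A : Set X} (hA : MeasurableSet A) :
    Measurable fun g => μ.real ((T g ⁻¹' A) ∆ A) :=
  (measurable_measure_prodMk_left ((hT hA).symmDiff (measurable_snd hA))).ennreal_toReal

section AutomaticContinuity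

variable {G : Type*} [Group G] [TopologicalSpace G] [IsTopologicalGroup G]
  [LocallyCompactSpace G] [SecondCountableTopology G] [MeasurableSpace G] [BorelSpace G]

lemma setOf_lt_mem_nhds_one_of_countable_translates {ψ : G → ℝ} (hψ : Measurable ψ)
    (hinv : ∀ g, ψ g⁻¹ = ψ g) (hmul : ∀ g h, ψ (g * h) ≤ ψ g + ψ h)
    (hcover : ∀ δ > 0, ∃ S : Set G, S.Countable ∧ ∀ g, ∃ s ∈ S, ψ (s * g) < δ) {ε : ℝ}
    (hε : 0 < ε) : {g | ψ g < ε} ∈ 𝓝 1 := by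
  obtain ⟨S, hS, hcov⟩ := hcover (ε / 2) (half_pos hε)
  set V := {g | ψ g < ε / 2}
  set m : Measure G := Measure.haar
  have hVpos : 0 < m V := by
    have hV : (univ : Set G) ⊆ ⋃ s ∈ S, s⁻¹ • V := fun g _ => by
      obtain ⟨s, hs, hsg⟩ := hcov g
      exact mem_biUnion hs (mem_smul_set_iff_inv_smul_mem.2 (by rwa [inv_inv, smul_eq_mul]))
    refine pos_iff_ne_zero.2 fun h0 => (isOpen_univ.measure_pos m univ_nonempty).ne'
      (measure_mono_null hV ((measure_biUnion_null_iff hS).2 fun s _ => by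
        rw [measure_smul, h0]))
  refine mem_of_superset (Measure.div_mem_nhds_one_of_haar_pos m V
    (measurableSet_lt hψ measurable_const) hVpos) ?_
  rintro _ ⟨b, hb, d, hd, rfl⟩
  calc ψ (b / d) ≤ ψ b + ψ d := by rw [div_eq_mul_inv, ← hinv d]; exact hmul b d⁻¹
    _ < ε / 2 + ε / 2 := add_lt_add hb hd
    _ = ε := add_halves ε

variable {X : Type*} [MeasurableSpace X] {μ : Measure X} {T : G → X → X} {A : Set X}

lemma setOf_measureReal_preimage_symmDiff_lt_mem_nhds_one [MeasurableSpace.CountablyGenerated X]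
    [IsFiniteMeasure μ] (hT : Measurable fun p : G × X => T p.1 p.2)
    (hmp : ∀ g : G, MeasurePreserving (T g) μ μ)
    (hmul : ∀ g h : G, ∀ x : X, T g (T h x) = T (g * h) x) (h1 : ∀ x : X, T 1 x = x)
    (hA : MeasurableSet A) {ε : ℝ} (hε : 0 < ε) :
    {g : G | μ.real ((T g ⁻¹' A) ∆ A) < ε} ∈ 𝓝 1 := by
  have := isSeparable_of_sigmaFinite μ
  refine setOf_lt_mem_nhds_one_of_countable_translates
    (measurable_measureReal_preimage_symmDiff hT hA)
    (measureReal_preimage_inv_symmDiff hmp hmul h1 hA)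
    (measureReal_preimage_mul_symmDiff_le hmp hmul hA) (fun δ hδ => ?_) hε
  obtain ⟨S, hS, hF⟩ := exists_countable_forall_measureReal_symmDiff_lt (μ := μ)
    (fun g : G => (hmp g).measurable hA) hδ
  refine ⟨S, hS, fun g => ?_⟩
  obtain ⟨s, hs, hsg⟩ := hF g⁻¹
  exact ⟨s, hs, by rwa [measureReal_preimage_symmDiff_preimage hmp hmul hA, inv_inv] at hsg⟩

end AutomaticContinuity

theorem statement13_general {G : Type} [Group G] [TopologicalSpace G] [IsTopologicalGroup G]
    [LocallyCompactSpace G] [SecondCountableTopology G]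
    [MeasurableSpace G] [BorelSpace G]
    (P : Set G)
    (hP : ∀ U : Set G, U ∈ nhds (1 : G) →
      ∃ u : ℕ → G, Tendsto u atTop (cocompact G) ∧ FPi u ⊆ U * P) :
    IsRecurrenceSet P := by
  intro K hK X _ _ μ _ T hT hmp hmul h1 A hA hμA
  have hApos : 0 < μ.real A := ENNReal.toReal_pos hμA.ne' (measure_ne_top μ A)
  obtain ⟨K₀, hK₀, hK₀1⟩ := exists_compact_mem_nhds (1 : G)
  obtain ⟨u, hu, hFP⟩ := hP _ (inter_mem (setOf_measureReal_preimage_symmDiff_lt_mem_nhds_one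
    hT hmp hmul h1 hA (by positivity : 0 < μ.real A ^ 2 / 8)) hK₀1)
  obtain ⟨n, hn, hdisj⟩ := exists_strictMono_disjoint_FPi hu (hK₀.mul hK)
  obtain ⟨x, hx, hAx⟩ := exists_mem_FPi_lt_measureReal_inter_preimage hmp hmul hA hApos (u ∘ n)
  obtain ⟨v, ⟨hvA, hvK₀⟩, p, hp, rfl⟩ := Set.mem_mul.1 (hFP (FPi_comp_subset u hn hx))
  refine ⟨p, ⟨hp, fun hpK => Set.disjoint_left.1 hdisj hx (mul_mem_mul hvK₀ hpK)⟩, ?_⟩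
  have hv : μ.real ((T v ⁻¹' A) ∆ A) < μ.real A ^ 2 / 8 := hvA
  have hle := measureReal_inter_preimage_mul_le hmp hmul hA v p
  have hpA : 0 < μ.real (A ∩ T p ⁻¹' A) := by linarith
  exact (ENNReal.toReal_pos_iff.1 hpA).1

/-- In a locally compact, second countable, Hausdorff group `G`, if for
every neighbourhood `U` of the identity the set `U * P` contains an increasing finite
products set of a sequence tending to infinity, then `P` is a set of measurable
recurrence. -/
theorem statement13 {G : Type} [Group G] [TopologicalSpace G] [IsTopologicalGroup G]
    [LocallyCompactSpace G] [SecondCountableTopology G] [T2Space G]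
    [MeasurableSpace G] [BorelSpace G]
    (P : Set G)
    (hP : ∀ U : Set G, U ∈ nhds (1 : G) →
      ∃ u : ℕ → G, Tendsto u atTop (cocompact G) ∧ FPi u ⊆ U * P) :
    IsRecurrenceSet P :=
  statement13_general P hP
end
end

section
/- In any locally compact, second countable, Hausdorff topological group G, the class of sets of measurable recurrence is partition regular: if R₁ ∪ ⋯ ∪ R_r is a set of measurable recurrence, then R_i is a set of measurable recurrence for some i ∈ {1,…,r}. -/
open MeasureTheory Filter Topology Set Pointwise

noncomputable section

/-
Partition regularity follows from taking products of counterexamples. If neither `R` nor `S`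
is a set of recurrence, with witnesses `(X₁, T₁, A₁, K₁)` and `(X₂, T₂, A₂, K₂)`, then the
diagonal action on `X₁ × X₂` returns `A₁ ×ˢ A₂` to itself with positive measure only at
times `g` for which both factors return with positive measure, so no `g ∈ (R ∪ S) \ (K₁ ∪ K₂)`
does.
-/

section Recurrence

variable {G : Type} [Group G] [TopologicalSpace G] [MeasurableSpace G]

theorem not_isRecurrenceSet_empty : ¬ IsRecurrenceSet (∅ : Set G) := by
  intro h
  obtain ⟨g, hg, -⟩ := h ∅ isCompact_empty Unit (Measure.dirac ()) (fun _ x => x) measurable_snd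
    (fun _ => MeasurePreserving.id _) (fun _ _ _ => rfl) (fun _ => rfl) univ MeasurableSet.univ
    (by simp)
  exact hg.1

theorem IsRecurrenceSet.or_of_union {R S : Set G} (h : IsRecurrenceSet (R ∪ S)) :
    IsRecurrenceSet R ∨ IsRecurrenceSet S := by
  by_contra! hc
  obtain ⟨hR, hS⟩ := hc
  simp only [IsRecurrenceSet, not_forall, not_exists, not_and, not_lt, nonpos_iff_eq_zero]
    at hR hS
  obtain ⟨K₁, hK₁, X₁, _, _, μ₁, _, T₁, hT₁, hμ₁, hmul₁, hone₁, A₁, hA₁, hμA₁, hret₁⟩ := hR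
  obtain ⟨K₂, hK₂, X₂, _, _, μ₂, _, T₂, hT₂, hμ₂, hmul₂, hone₂, A₂, hA₂, hμA₂, hret₂⟩ := hS
  obtain ⟨g, ⟨hgRS, hgK⟩, hpos⟩ := h (K₁ ∪ K₂) (hK₁.union hK₂) (X₁ × X₂) (μ₁.prod μ₂)
    (fun g => Prod.map (T₁ g) (T₂ g))
    ((hT₁.comp (measurable_fst.prodMk (measurable_fst.comp measurable_snd))).prodMk
      (hT₂.comp (measurable_fst.prodMk (measurable_snd.comp measurable_snd))))
    (fun g => (hμ₁ g).prod (hμ₂ g))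
    (fun g h x => by simp only [Prod.map, hmul₁, hmul₂])
    (fun x => by simp only [Prod.map, hone₁, hone₂])
    (A₁ ×ˢ A₂) (hA₁.prod hA₂)
    (by rw [Measure.prod_prod]; exact ENNReal.mul_pos hμA₁.ne' hμA₂.ne')
  rw [preimage_prod_map_prod, prod_inter_prod, Measure.prod_prod] at hpos
  rcases hgRS with hgR | hgS
  · simp [hret₁ g ⟨hgR, fun hk => hgK (Or.inl hk)⟩] at hpos
  · simp [hret₂ g ⟨hgS, fun hk => hgK (Or.inr hk)⟩] at hpos

theorem IsRecurrenceSet.exists_mem_of_biUnion {ι : Type*} {R : ι → Set G} (s : Finset ι)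
    (h : IsRecurrenceSet (⋃ i ∈ s, R i)) : ∃ i ∈ s, IsRecurrenceSet (R i) := by
  classical
  induction s using Finset.induction_on with
  | empty => simp [not_isRecurrenceSet_empty] at h
  | insert a s _ ih =>
    rw [Finset.set_biUnion_insert] at h
    rcases h.or_of_union with ha | hs
    · exact ⟨a, Finset.mem_insert_self a s, ha⟩
    · obtain ⟨i, hi, hRi⟩ := ih hs
      exact ⟨i, Finset.mem_insert_of_mem hi, hRi⟩

theorem IsRecurrenceSet.exists_of_iUnion {ι : Type*} [Finite ι] {R : ι → Set G}
    (h : IsRecurrenceSet (⋃ i, R i)) : ∃ i, IsRecurrenceSet (R i) := by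
  have := Fintype.ofFinite ι
  obtain ⟨i, -, hi⟩ := exists_mem_of_biUnion Finset.univ (by simpa using h)
  exact ⟨i, hi⟩

end Recurrence

theorem statement14_general {G : Type} [Group G] [TopologicalSpace G]
    [MeasurableSpace G]
    (r : ℕ) (R : Fin r → Set G)
    (hR : IsRecurrenceSet (⋃ i, R i)) :
    ∃ i, IsRecurrenceSet (R i) :=
  hR.exists_of_iUnion

/-- In a locally compact, second countable, Hausdorff group, the class of
sets of measurable recurrence is partition regular: if a finite union `R 1 ∪ ⋯ ∪ R r`
is a set of measurable recurrence then some `R i` is. -/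
theorem statement14 {G : Type} [Group G] [TopologicalSpace G] [IsTopologicalGroup G]
    [LocallyCompactSpace G] [SecondCountableTopology G] [T2Space G]
    [MeasurableSpace G] [BorelSpace G]
    (r : ℕ) (R : Fin r → Set G)
    (hR : IsRecurrenceSet (⋃ i, R i)) :
    ∃ i, IsRecurrenceSet (R i) :=
  statement14_general r R hR
end
end

section
/- Let G be a topological group that is not compact. Then for any thick subset T of G and any compact subset K of G there exists g ∈ G ∖ K such that Kg ⊆ T. -/
open MeasureTheory Filter Topology Set Pointwise

noncomputable section

theorem ThickSet.exists_translate_and_translate_mul {G : Type*} [Group G] [TopologicalSpace G]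
    [ContinuousMul G] {T : Set G} (hT : ThickSet T) {K : Set G} (hK : IsCompact K) (h : G) :
    ∃ g : G, (fun k => k * g) '' K ⊆ T ∧ (fun k => k * (h * g)) '' K ⊆ T := by
  obtain ⟨g, hg⟩ := hT _ (hK.union (hK.image (continuous_mul_const h)))
  refine ⟨g, fun x hx => hg (image_mono subset_union_left hx), ?_⟩
  rintro _ ⟨k, hk, rfl⟩
  simpa only [mul_assoc] using hg ⟨k * h, Or.inr ⟨k, hk, rfl⟩, rfl⟩

/-- In a non-compact topological group, for any thick set `T` and any
compact set `K` there exists `g ∉ K` with `K * g ⊆ T`. -/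
theorem statement16 {G : Type} [Group G] [TopologicalSpace G] [IsTopologicalGroup G]
    (hNC : ¬ CompactSpace G)
    (T : Set G) (hT : ThickSet T) (K : Set G) (hK : IsCompact K) :
    ∃ g : G, g ∉ K ∧ (fun k => k * g) '' K ⊆ T := by
  have : NoncompactSpace G := not_compactSpace_iff.mp hNC
  -- If `g ∈ K`, then `h * g ∈ h • K` lies outside `K`.
  obtain ⟨h, hKh⟩ := exists_disjoint_smul_of_isCompact hK hK
  obtain ⟨g, hg, hhg⟩ := hT.exists_translate_and_translate_mul hK h
  by_cases hgK : g ∈ K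
  · exact ⟨h * g, hKh.notMem_of_mem_right (smul_mem_smul_set hgK), hhg⟩
  · exact ⟨g, hgK, hg⟩
end
end

section
/- Let G be a group, S ⊆ G any subset, and F ⊆ G a non-empty subset. Then there exists a subset S′ ⊆ S such that F⁻¹FS′ ⊇ S and f₁S′ ∩ f₂S′ = ∅ for any distinct f₁, f₂ ∈ F. -/
open MeasureTheory Filter Topology Set Pointwise

noncomputable section

/-! Take `S'` maximal, by Zorn's lemma, among the subsets of `S` whose orbits `F s` under left
multiplication are pairwise disjoint. A coincidence `f₁ a = f₂ b` between translates of `S'` is a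
point common to `F a` and `F b`, so it forces `a = b` and then `f₁ = f₂`. By maximality every
`s ∈ S \ S'` has `F s` meeting some `F t` with `t ∈ S'`, that is `s ∈ F⁻¹ F t`; the points of
`S'` themselves are covered because `F` is nonempty. -/

theorem Set.exists_maximal_pairwise_subset {α : Type*} (r : α → α → Prop) (S : Set α) :
    ∃ T, Maximal (fun T => T ⊆ S ∧ T.Pairwise r) T :=
  zorn_subset _ fun c hc hchain =>
    ⟨⋃₀ c, ⟨sUnion_subset fun _ ht => (hc ht).1, hchain.pairwise_sUnion.2 fun _ ht => (hc ht).2⟩,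
      fun _ => subset_sUnion_of_mem⟩

theorem Maximal.exists_not_rel_of_pairwise {α : Type*} {r : α → α → Prop} [Std.Symm r]
    {S T : Set α} (hT : Maximal (fun T => T ⊆ S ∧ T.Pairwise r) T) {s : α} (hs : s ∈ S)
    (hsT : s ∉ T) : ∃ t ∈ T, ¬r s t := by
  by_contra! h
  have hins : (insert s T).Pairwise r :=
    Set.pairwise_insert_of_symm.2 ⟨hT.prop.2, fun t ht _ => h t ht⟩
  exact hsT (hT.mem_of_prop_insert ⟨insert_subset hs hT.prop.1, hins⟩)

section Group

variable {G : Type*} [Group G] {F T : Set G}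

theorem Set.mem_inv_mul_mul_of_not_disjoint_mul_singleton {a b : G}
    (h : ¬Disjoint (F * {a}) (F * {b})) (hb : b ∈ T) : a ∈ F⁻¹ * F * T := by
  obtain ⟨_, ⟨f₁, hf₁, a', ha', rfl⟩, ⟨f₂, hf₂, b', hb', hf⟩⟩ := Set.not_disjoint_iff.1 h
  rw [mem_singleton_iff] at ha' hb'
  subst a' b'
  refine ⟨f₁⁻¹ * f₂, mul_mem_mul (inv_mem_inv.2 hf₁) hf₂, b, hb, ?_⟩
  change f₂ * b = f₁ * a at hf
  change f₁⁻¹ * f₂ * b = a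
  rw [mul_assoc, hf, inv_mul_cancel_left]

theorem Set.PairwiseDisjoint.disjoint_smul_of_mul_singleton
    (hT : T.PairwiseDisjoint fun t => F * {t}) {f₁ f₂ : G} (hf₁ : f₁ ∈ F) (hf₂ : f₂ ∈ F)
    (hne : f₁ ≠ f₂) : Disjoint (f₁ • T) (f₂ • T) := by
  refine Set.disjoint_left.2 ?_
  rintro _ ⟨a, ha, rfl⟩ ⟨b, hb, hab⟩
  simp only [smul_eq_mul] at hab
  have hmeet : ¬Disjoint (F * {a}) (F * {b}) :=
    Set.not_disjoint_iff.2 ⟨f₁ * a, mul_mem_mul hf₁ rfl, hab ▸ mul_mem_mul hf₂ rfl⟩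
  obtain rfl := hT.elim ha hb hmeet
  exact hne (mul_right_cancel hab.symm)

end Group

/-- For any subsets `S, F` of a group `G` with `F` nonempty, there is
`S' ⊆ S` with `S ⊆ F⁻¹ * F * S'` whose translates `f • S'` for distinct `f ∈ F` are
pairwise disjoint. -/
theorem statement17 {G : Type} [Group G] (S F : Set G) (hF : F.Nonempty) :
    ∃ S' : Set G, S' ⊆ S ∧ S ⊆ F⁻¹ * F * S' ∧
      ∀ f₁ ∈ F, ∀ f₂ ∈ F, f₁ ≠ f₂ → Disjoint (f₁ • S') (f₂ • S') := by
  obtain ⟨S', hS'⟩ :=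
    Set.exists_maximal_pairwise_subset (Function.onFun Disjoint fun s => F * {s}) S
  refine ⟨S', hS'.prop.1, fun s hs => ?_, fun f₁ hf₁ f₂ hf₂ =>
    Set.PairwiseDisjoint.disjoint_smul_of_mul_singleton hS'.prop.2 hf₁ hf₂⟩
  by_cases hsS' : s ∈ S'
  · refine Set.mem_inv_mul_mul_of_not_disjoint_mul_singleton ?_ hsS'
    exact fun h => (hF.mul (singleton_nonempty s)).ne_empty (disjoint_self.1 h)
  · obtain ⟨t, ht, hst⟩ := hS'.exists_not_rel_of_pairwise hs hsS'
    exact Set.mem_inv_mul_mul_of_not_disjoint_mul_singleton hst ht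
end
end

section
/- Let G be a locally compact, second countable, Hausdorff, amenable topological group that is not compact. Then for every relatively compact neighborhood U of the identity there exists a decreasing sequence S₁ ⊇ S₂ ⊇ ⋯ of discrete, syndetic subsets of G such that the two-sided upper Banach density of US_n tends to 0 as n → ∞. -/
open MeasureTheory Filter Topology Set Pointwise

noncomputable section

/-!
Let `C = closure U`. Since `G` is not compact, it contains `n + 1` pairwise disjoint left
translates `f C`, `f ∈ F_n`, with `1 ∈ F_n`; put `V_n = F_n C`. Take `S_n` to be a maximal
subset of `S_{n-1}` (with `S_{-1} = G`) whose right translates `V_n s` are pairwise disjoint.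
Maximality gives `S_{n-1} ⊆ V_n⁻¹ V_n S_n`, so syndeticity passes from `S_{n-1}` to `S_n`, and
disjointness makes `S_n` discrete and the `n + 1` sets `f C S_n` pairwise disjoint. A Reiter
sequence is asymptotically invariant under left translation, so these sets all have the same
density, and `U S_n ⊆ C S_n` has density at most `1 / (n + 1)`.
-/

section RightSeparated

variable {G : Type*} [Group G]

def RightSeparated (V S : Set G) : Prop :=
  S.Pairwise fun a b => Disjoint (V * {a}) (V * {b})

theorem mem_inv_mul_mul_of_not_disjoint {V S : Set G} {a b : G}
    (h : ¬Disjoint (V * {a}) (V * {b})) (hb : b ∈ S) : a ∈ V⁻¹ * V * S := by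
  rw [mul_singleton, mul_singleton] at h
  obtain ⟨_, ⟨v, hv, rfl⟩, ⟨w, hw, hx⟩⟩ := not_disjoint_iff.mp h
  exact ⟨v⁻¹ * w, mul_mem_mul (inv_mem_inv.mpr hv) hw, b, hb, by
    simp only at hx ⊢
    rw [mul_assoc, hx, inv_mul_cancel_left]⟩

theorem exists_rightSeparated_subset_cover (A : Set G) {V : Set G} (hV : V.Nonempty) :
    ∃ S ⊆ A, RightSeparated V S ∧ A ⊆ V⁻¹ * V * S := by
  obtain ⟨S, hS⟩ := zorn_subset {S | S ⊆ A ∧ RightSeparated V S} fun c hc hchain =>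
    ⟨⋃₀ c, ⟨sUnion_subset fun s hs => (hc hs).1,
      (pairwise_sUnion hchain.directedOn).2 fun s hs => (hc hs).2⟩,
      fun _ => subset_sUnion_of_mem⟩
  refine ⟨S, hS.prop.1, hS.prop.2, fun a ha => ?_⟩
  by_contra hcov
  have haS : a ∉ S := fun haS => by
    obtain ⟨v, hv⟩ := hV
    exact hcov ⟨v⁻¹ * v, mul_mem_mul (inv_mem_inv.mpr hv) hv, a, haS, by simp⟩
  have hsep : RightSeparated V (insert a S) := hS.prop.2.insert fun b hb _ =>
    have hab : Disjoint (V * {a}) (V * {b}) := by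
      by_contra h
      exact hcov (mem_inv_mul_mul_of_not_disjoint h hb)
    ⟨hab, hab.symm⟩
  exact haS (hS.2 ⟨insert_subset ha hS.prop.1, hsep⟩ (subset_insert a S) (mem_insert a S))

theorem RightSeparated.pairwiseDisjoint_smul_mul {F C S : Set G}
    (hF : F.PairwiseDisjoint (· • C)) (hS : RightSeparated (F * C) S) :
    F.PairwiseDisjoint (· • (C * S)) := by
  intro f hf f' hf' hne
  refine disjoint_left.mpr ?_
  rintro _ ⟨_, ⟨c, hc, s, hs, rfl⟩, rfl⟩ ⟨_, ⟨c', hc', s', hs', rfl⟩, hx⟩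
  simp only [smul_eq_mul, ← mul_assoc] at hx
  rcases eq_or_ne s s' with rfl | hss
  · exact (hF hf hf' hne).ne_of_mem ⟨c, hc, rfl⟩ ⟨c', hc', rfl⟩ (mul_right_cancel hx).symm
  · exact (hS hs hs' hss).ne_of_mem ⟨f * c, mul_mem_mul hf hc, s, rfl, rfl⟩
      ⟨f' * c', mul_mem_mul hf' hc', s', rfl, rfl⟩ hx.symm

variable [TopologicalSpace G]

theorem RightSeparated.discreteTopology [IsTopologicalGroup G] {V S : Set G}
    (hS : RightSeparated V S) (hV : V ∈ 𝓝 1) : DiscreteTopology S := by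
  refine isDiscrete_iff_discreteTopology.mp (IsDiscrete.of_nhdsWithin fun x hx => ?_)
  refine le_pure_iff.mpr (mem_nhdsWithin_iff_exists_mem_nhds_inter.mpr
    ⟨V * {x}, mul_singleton_mem_nhds_of_nhds_one x hV, ?_⟩)
  rintro y ⟨hyx, hy⟩
  by_contra hne
  exact (hS hx hy (Ne.symm hne)).ne_of_mem hyx ⟨1, mem_of_mem_nhds hV, y, rfl, one_mul y⟩ rfl

theorem RightSeparated.countable [IsTopologicalGroup G] [SecondCountableTopology G]
    {V S : Set G} (hS : RightSeparated V S) (hV : V ∈ 𝓝 1) : S.Countable :=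
  have := hS.discreteTopology hV
  countable_coe_iff.mp countable_of_Lindelof_of_discrete

theorem syndeticSet_univ : SyndeticSet (univ : Set G) :=
  ⟨{1}, isCompact_singleton, by simp⟩

theorem SyndeticSet.of_subset_mul [ContinuousMul G] {S T K : Set G} (hS : SyndeticSet S)
    (hK : IsCompact K) (h : S ⊆ K * T) : SyndeticSet T := by
  obtain ⟨L, hL, hLS⟩ := hS
  refine ⟨L * K, hL.mul hK, univ_subset_iff.mp ?_⟩
  calc univ = L * S := hLS.symm
    _ ⊆ L * (K * T) := mul_subset_mul_left h
    _ = L * K * T := (mul_assoc L K T).symm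

theorem exists_antitone_rightSeparated_syndetic [IsTopologicalGroup G] (V : ℕ → Set G)
    (hV : ∀ n, IsCompact (V n)) (hne : ∀ n, (V n).Nonempty) :
    ∃ S : ℕ → Set G, (∀ n, S (n + 1) ⊆ S n) ∧
      ∀ n, RightSeparated (V n) (S n) ∧ SyndeticSet (S n) := by
  choose T hTA hTsep hTcov using fun n A => exists_rightSeparated_subset_cover A (hne n)
  let A : ℕ → Set G := fun n => Nat.rec univ T n
  have hA : ∀ n, SyndeticSet (A n) := fun n => by
    induction n with
    | zero => exact syndeticSet_univ
    | succ n ih => exact ih.of_subset_mul ((hV n).inv.mul (hV n)) (hTcov n (A n))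
  exact ⟨fun n => A (n + 1), fun n => hTA (n + 1) (A (n + 1)),
    fun n => ⟨hTsep n (A n), hA (n + 1)⟩⟩

theorem exists_finset_pairwiseDisjoint_smul [IsTopologicalGroup G] [NoncompactSpace G]
    {C : Set G} (hC : IsCompact C) (n : ℕ) :
    ∃ F : Finset G, 1 ∈ F ∧ F.card = n + 1 ∧ (F : Set G).PairwiseDisjoint (· • C) := by
  induction n with
  | zero => exact ⟨{1}, Finset.mem_singleton_self 1, rfl, by simp⟩
  | succ n ih =>
    classical
    obtain ⟨F, hF1, hFcard, hF⟩ := ih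
    have hK : IsCompact ((F : Set G) * (C * C⁻¹) ∪ F) :=
      (F.finite_toSet.isCompact.mul (hC.mul hC.inv)).union F.finite_toSet.isCompact
    obtain ⟨g, hg⟩ := nonempty_compl.mpr hK.ne_univ
    simp only [mem_compl_iff, mem_union, not_or, Finset.mem_coe] at hg
    refine ⟨insert g F, Finset.mem_insert_of_mem hF1, by rw [Finset.card_insert_of_notMem hg.2,
      hFcard], ?_⟩
    rw [Finset.coe_insert]
    refine hF.insert fun f hf _ => disjoint_left.mpr ?_
    rintro _ ⟨c, hc, rfl⟩ ⟨c', hc', hx⟩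
    exact hg.1 ⟨f, hf, c' * c⁻¹, mul_mem_mul hc' (inv_mem_inv.mpr hc), by
      simp only [smul_eq_mul] at hx ⊢
      rw [← mul_assoc, hx, mul_inv_cancel_right]⟩

end RightSeparated

section Density

variable {G : Type*} [Group G] [MeasurableSpace G] [MeasurableMul G] {m : Measure G}
  [m.IsMulLeftInvariant]

theorem setIntegral_smul_set (φ : G → ℝ) (g : G) (E : Set G) :
    ∫ x in g • E, φ x ∂m = ∫ x in E, φ (g * x) ∂m := by
  rw [← (measurePreserving_mul_left m g).setIntegral_preimage_emb (measurableEmbedding_mulLeft g),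
    show (g * ·) ⁻¹' (g • E) = E from (preimage_smul g _).trans (inv_smul_smul g E)]

theorem setIntegral_le_setIntegral_smul_add {φ : G → ℝ} (hφ : Integrable φ m) (g : G)
    (E : Set G) :
    ∫ x in E, φ x ∂m ≤ ∫ x in g • E, φ x ∂m + ∫ x, |φ (g * x) - φ x| ∂m := by
  have hφg : Integrable (fun x => φ (g * x)) m := hφ.comp_mul_left g
  rw [setIntegral_smul_set]
  calc ∫ x in E, φ x ∂m = ∫ x in E, φ (g * x) ∂m + ∫ x in E, (φ x - φ (g * x)) ∂m := by
        rw [integral_sub hφ.integrableOn hφg.integrableOn]; ring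
    _ ≤ ∫ x in E, φ (g * x) ∂m + ∫ x in E, |φ (g * x) - φ x| ∂m :=
        add_le_add le_rfl (setIntegral_mono (hφ.sub hφg).integrableOn
          (hφg.sub hφ).abs.integrableOn fun x => (le_abs_self _).trans_eq (abs_sub_comm _ _))
    _ ≤ ∫ x in E, φ (g * x) ∂m + ∫ x, |φ (g * x) - φ x| ∂m :=
        add_le_add_right (setIntegral_le_integral (hφg.sub hφ).abs
          (Eventually.of_forall fun _ => abs_nonneg _)) _

theorem card_mul_setIntegral_le {φ : G → ℝ} (hφ0 : 0 ≤ φ) (hφ : Integrable φ m) {E : Set G}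
    (hE : MeasurableSet E) {F : Finset G} (hF : (F : Set G).PairwiseDisjoint (· • E)) :
    F.card * ∫ x in E, φ x ∂m ≤ ∫ x, φ x ∂m + ∑ g ∈ F, ∫ x, |φ (g * x) - φ x| ∂m := by
  have hsum : ∑ g ∈ F, ∫ x in g • E, φ x ∂m ≤ ∫ x, φ x ∂m := by
    rw [← integral_biUnion_finset F (fun g _ => hE.const_smul g) hF fun _ _ => hφ.integrableOn]
    exact setIntegral_le_integral hφ (Eventually.of_forall hφ0)
  calc F.card * ∫ x in E, φ x ∂m = ∑ _g ∈ F, ∫ x in E, φ x ∂m := by simp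
    _ ≤ ∑ g ∈ F, (∫ x in g • E, φ x ∂m + ∫ x, |φ (g * x) - φ x| ∂m) :=
        Finset.sum_le_sum fun g _ => setIntegral_le_setIntegral_smul_add hφ g E
    _ ≤ ∫ x, φ x ∂m + ∑ g ∈ F, ∫ x, |φ (g * x) - φ x| ∂m := by
        rw [Finset.sum_add_distrib]; gcongr

end Density

section Reiter

variable {G : Type*} [Group G] [MeasurableSpace G] {m : Measure G} {Φ : ℕ → G → ℝ}

theorem IsLeftReiter.setIntegral_nonneg (hΦ : IsLeftReiter m Φ) (N : ℕ) (E : Set G) :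
    0 ≤ ∫ x in E, Φ N x ∂m :=
  integral_nonneg (hΦ.1 N)

theorem IsLeftReiter.setIntegral_le_one (hΦ : IsLeftReiter m Φ) (N : ℕ) (E : Set G) :
    ∫ x in E, Φ N x ∂m ≤ 1 :=
  hΦ.2.2.1 N ▸ setIntegral_le_integral (hΦ.2.1 N) (Eventually.of_forall (hΦ.1 N))

theorem IsLeftReiter.upperDensReiter_nonneg (hΦ : IsLeftReiter m Φ) (E : Set G) :
    0 ≤ upperDensReiter m Φ E :=
  le_limsup_of_frequently_le (Frequently.of_forall (hΦ.setIntegral_nonneg · E))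
    (isBoundedUnder_of ⟨1, (hΦ.setIntegral_le_one · E)⟩)

theorem IsLeftReiter.upperDensReiter_mono (hΦ : IsLeftReiter m Φ) {E E' : Set G}
    (h : E ⊆ E') : upperDensReiter m Φ E ≤ upperDensReiter m Φ E' :=
  limsup_le_limsup (Eventually.of_forall fun N =>
      setIntegral_mono_set (hΦ.2.1 N).integrableOn (Eventually.of_forall (hΦ.1 N))
        (Eventually.of_forall h))
    (isCoboundedUnder_le_of_le atTop (hΦ.setIntegral_nonneg · E))
    (isBoundedUnder_of ⟨1, (hΦ.setIntegral_le_one · E')⟩)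

theorem IsLeftReiter.upperDensReiter_le_inv_card [MeasurableMul G] [m.IsMulLeftInvariant]
    (hΦ : IsLeftReiter m Φ) {E : Set G} (hE : MeasurableSet E) {F : Finset G}
    (hFne : F.Nonempty) (hF : (F : Set G).PairwiseDisjoint (· • E)) :
    upperDensReiter m Φ E ≤ (F.card : ℝ)⁻¹ := by
  obtain ⟨hΦ0, hΦint, hΦ1, hΦinv⟩ := hΦ
  set err : ℕ → ℝ := fun N => ∑ g ∈ F, ∫ x, |Φ N (g * x) - Φ N x| ∂m
  have hcard : (0 : ℝ) < F.card := by exact_mod_cast hFne.card_pos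
  have hbound : ∀ N, ∫ x in E, Φ N x ∂m ≤ (1 + err N) / F.card := fun N => by
    rw [le_div_iff₀ hcard, mul_comm, ← hΦ1 N]
    exact card_mul_setIntegral_le (hΦ0 N) (hΦint N) hE hF
  have herr : Tendsto err atTop (𝓝 0) := by
    have hg : ∀ g ∈ F, Tendsto (fun N => ∫ x, |Φ N (g * x) - Φ N x| ∂m) atTop (𝓝 0) :=
      fun g _ => by simpa using hΦinv g⁻¹
    simpa using tendsto_finsetSum F hg
  have hlim : Tendsto (fun N => (1 + err N) / F.card) atTop (𝓝 (F.card : ℝ)⁻¹) := by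
    simpa using (herr.const_add 1).div_const (F.card : ℝ)
  calc upperDensReiter m Φ E ≤ limsup (fun N => (1 + err N) / F.card) atTop :=
        limsup_le_limsup (Eventually.of_forall hbound)
          (isCoboundedUnder_le_of_le atTop fun N => integral_nonneg (hΦ0 N))
          hlim.isBoundedUnder_le
    _ = (F.card : ℝ)⁻¹ := hlim.limsup_eq

theorem upperBanachDens_nonneg [TopologicalSpace G] (m : Measure G) (E : Set G) :
    0 ≤ upperBanachDens m E :=
  Real.sSup_nonneg (by rintro _ ⟨Φ, hΦ, rfl⟩; exact hΦ.1.upperDensReiter_nonneg E)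

theorem upperBanachDens_le [TopologicalSpace G] {E : Set G} {c : ℝ} (hc : 0 ≤ c)
    (h : ∀ Φ, IsLeftReiter m Φ → upperDensReiter m Φ E ≤ c) : upperBanachDens m E ≤ c :=
  Real.sSup_le (by rintro _ ⟨Φ, hΦ, rfl⟩; exact h Φ hΦ.1) hc

end Reiter

section Main

variable {G : Type*} [Group G] [TopologicalSpace G] [IsTopologicalGroup G] [T2Space G]
  [MeasurableSpace G] [BorelSpace G]

theorem IsCompact.measurableSet_mul {C S : Set G} (hC : IsCompact C) (hS : S.Countable) :
    MeasurableSet (C * S) := by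
  rw [← iUnion_mul_right_image]
  exact .biUnion hS fun a _ => (hC.image (continuous_mul_const a)).measurableSet

theorem upperBanachDens_mul_le_inv_card [SecondCountableTopology G] (m : Measure G)
    [m.IsMulLeftInvariant] {U C S : Set G} {F : Finset G} (hUC : U ⊆ C) (hC : IsCompact C)
    (hC1 : C ∈ 𝓝 1) (hF1 : 1 ∈ F) (hFC : (F : Set G).PairwiseDisjoint (· • C))
    (hS : RightSeparated ((F : Set G) * C) S) :
    upperBanachDens m (U * S) ≤ (F.card : ℝ)⁻¹ := by
  have hCS : MeasurableSet (C * S) :=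
    hC.measurableSet_mul (hS.countable (mem_of_superset hC1 (subset_mul_right C hF1)))
  refine upperBanachDens_le (by positivity) fun Φ hΦ => ?_
  calc upperDensReiter m Φ (U * S) ≤ upperDensReiter m Φ (C * S) :=
        hΦ.upperDensReiter_mono (mul_subset_mul_right hUC)
    _ ≤ (F.card : ℝ)⁻¹ :=
        hΦ.upperDensReiter_le_inv_card hCS ⟨1, hF1⟩ (hS.pairwiseDisjoint_smul_mul hFC)

end Main

theorem statement18_general {G : Type} [Group G] [TopologicalSpace G] [IsTopologicalGroup G]
    [SecondCountableTopology G] [T2Space G]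
    [MeasurableSpace G] [BorelSpace G]
    (m : Measure G) [m.IsHaarMeasure]
    (hNC : ¬ CompactSpace G)
    (U : Set G) (hU : U ∈ nhds (1 : G)) (hUc : IsCompact (closure U)) :
    ∃ S : ℕ → Set G,
      (∀ n, S (n + 1) ⊆ S n) ∧
      (∀ n, SyndeticSet (S n)) ∧
      (∀ n, DiscreteTopology (S n)) ∧
      Tendsto (fun n => upperBanachDens m (U * S n)) atTop (nhds 0) := by
  have : NoncompactSpace G := not_compactSpace_iff.mp hNC
  have hC1 : closure U ∈ 𝓝 (1 : G) := mem_of_superset hU subset_closure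
  choose F hF1 hFcard hFC using exists_finset_pairwiseDisjoint_smul hUc
  have hV1 : ∀ n, (F n : Set G) * closure U ∈ 𝓝 1 :=
    fun n => mem_of_superset hC1 (subset_mul_right _ (hF1 n))
  obtain ⟨S, hanti, hS⟩ := exists_antitone_rightSeparated_syndetic _
    (fun n => (F n).finite_toSet.isCompact.mul hUc) fun n => ⟨1, mem_of_mem_nhds (hV1 n)⟩
  refine ⟨S, hanti, fun n => (hS n).2, fun n => (hS n).1.discreteTopology (hV1 n), ?_⟩
  have hdens : ∀ n, upperBanachDens m (U * S n) ≤ 1 / ((n : ℝ) + 1) := fun n => by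
    simpa [hFcard] using
      upperBanachDens_mul_le_inv_card m subset_closure hUc hC1 (hF1 n) (hFC n) (hS n).1
  exact tendsto_of_tendsto_of_tendsto_of_le_of_le tendsto_const_nhds
    tendsto_one_div_add_atTop_nhds_zero_nat (fun n => upperBanachDens_nonneg m _) hdens

/-- In a non-compact, locally compact, second countable, Hausdorff,
amenable group, for every relatively compact neighbourhood `U` of the identity there is
a decreasing sequence of discrete syndetic sets `S n` with the two-sided upper Banach
density of `U * S n` tending to `0`. -/
theorem statement18 {G : Type} [Group G] [TopologicalSpace G] [IsTopologicalGroup G]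
    [LocallyCompactSpace G] [SecondCountableTopology G] [T2Space G]
    [MeasurableSpace G] [BorelSpace G]
    (m : Measure G) [m.IsHaarMeasure]
    (hAmen : HasLeftInvariantMean G) (hNC : ¬ CompactSpace G)
    (U : Set G) (hU : U ∈ nhds (1 : G)) (hUc : IsCompact (closure U)) :
    ∃ S : ℕ → Set G,
      (∀ n, S (n + 1) ⊆ S n) ∧
      (∀ n, SyndeticSet (S n)) ∧
      (∀ n, DiscreteTopology (S n)) ∧
      Tendsto (fun n => upperBanachDens m (U * S n)) atTop (nhds 0) :=
  statement18_general m hNC U hU hUc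
end
end

section
/- Let G be a locally compact, second countable, Hausdorff, amenable topological group with left Haar measure m and let Φ be a left, right, or two-sided Følner sequence in G. Let A_i (i ∈ ℕ) be Borel subsets of G such that the density of each A_i with respect to Φ exists, the sequence i ↦ d_Φ(A_i) is summable, and the density of A₁ ∪ ⋯ ∪ A_n with respect to Φ exists for every n. Then there exist subsets A′_i ⊆ A_i with A_i ∖ A′_i contained in a compact set, such that the density with respect to Φ of C = ⋃_i A′_i exists and equals lim_{n→∞} d_Φ(A₁ ∪ ⋯ ∪ A_n). -/
open MeasureTheory Filter Topology Set Pointwise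

noncomputable section

/-!
If `G` is compact, a Følner sequence eventually fills up almost all of `G`, so the density of
any set is its normalised Haar measure and continuity from below gives the claim with `A' = A`.

If `G` is not compact, every compact set `C` has density zero: along a left Følner sequence `C`
is asymptotically no denser than any translate `g • C`, and `G` contains arbitrarily many pairwise
disjoint translates of `C`. Choose `Mᵢ` such that `A i` has relative density below `d i + 2⁻ⁱ` in
`Φ N` for all `N ≥ Mᵢ`, and remove from `A i` the compact set `Φ 0 ∪ ⋯ ∪ Φ Mᵢ`. Then the tail
`⋃_{i > k} A' i` has density at most `∑_{i > k} (d i + 2⁻ⁱ)` in every `Φ N`, while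
`A' 0 ∪ ⋯ ∪ A' n` misses only a compact part of `A 0 ∪ ⋯ ∪ A n`, so the density of `⋃ i, A' i`
is squeezed to `lim b`.

A right Følner sequence forces `G` to be unimodular; the Haar measure is then inversion
invariant, and inversion turns a right Følner sequence into a left one.
-/

open scoped ENNReal NNReal

section DensFrac

variable {G : Type*} [MeasurableSpace G] {m : Measure G} {Φ : ℕ → Set G} {N : ℕ}

lemma measure_inter_div_le_one (s t : Set G) : m (s ∩ t) / m t ≤ 1 :=
  ENNReal.div_le_of_le_mul (by rw [one_mul]; exact measure_mono inter_subset_right)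

lemma measure_inter_div_ne_top (s t : Set G) : m (s ∩ t) / m t ≠ ∞ :=
  ne_top_of_le_ne_top ENNReal.one_ne_top (measure_inter_div_le_one s t)

lemma densFrac_eq_toReal_div (E : Set G) :
    densFrac m Φ E N = (m (E ∩ Φ N) / m (Φ N)).toReal :=
  (ENNReal.toReal_div _ _).symm

lemma densFrac_nonneg (E : Set G) : 0 ≤ densFrac m Φ E N := by
  unfold densFrac; positivity

lemma densFrac_le_one (E : Set G) : densFrac m Φ E N ≤ 1 := by
  simpa [densFrac_eq_toReal_div] using
    ENNReal.toReal_mono ENNReal.one_ne_top (measure_inter_div_le_one (m := m) E (Φ N))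

lemma densFrac_mono {E F : Set G} (h : E ⊆ F) : densFrac m Φ E N ≤ densFrac m Φ F N := by
  simp only [densFrac_eq_toReal_div]
  exact ENNReal.toReal_mono (measure_inter_div_ne_top F (Φ N))
    (ENNReal.div_le_div_right (measure_mono (inter_subset_inter_left _ h)) _)

lemma densFrac_union_le (E F : Set G) :
    densFrac m Φ (E ∪ F) N ≤ densFrac m Φ E N + densFrac m Φ F N := by
  simp only [densFrac_eq_toReal_div]
  rw [← ENNReal.toReal_add (measure_inter_div_ne_top E (Φ N))
    (measure_inter_div_ne_top F (Φ N)), ← ENNReal.add_div, union_inter_distrib_right]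
  exact ENNReal.toReal_mono (by simp [ENNReal.add_div, measure_inter_div_ne_top])
    (ENNReal.div_le_div_right (measure_union_le _ _) _)

lemma densFrac_iUnion_le {E : ℕ → Set G} {f : ℕ → ℝ} (hf : Summable f)
    (hE : ∀ i, densFrac m Φ (E i) N ≤ f i) : densFrac m Φ (⋃ i, E i) N ≤ ∑' i, f i := by
  have hf0 i : 0 ≤ f i := (densFrac_nonneg _).trans (hE i)
  rw [densFrac_eq_toReal_div]
  refine ENNReal.toReal_le_of_le_ofReal (tsum_nonneg hf0) ?_
  calc m ((⋃ i, E i) ∩ Φ N) / m (Φ N)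
      ≤ (∑' i, m (E i ∩ Φ N)) / m (Φ N) := by
        rw [iUnion_inter]; exact ENNReal.div_le_div_right (measure_iUnion_le _) _
    _ = ∑' i, m (E i ∩ Φ N) / m (Φ N) := by
        simp only [div_eq_mul_inv, ENNReal.tsum_mul_right]
    _ ≤ ∑' i, ENNReal.ofReal (f i) := by
        refine ENNReal.tsum_le_tsum fun i => ?_
        rw [← ENNReal.ofReal_toReal (measure_inter_div_ne_top (E i) (Φ N)),
          ← densFrac_eq_toReal_div]
        exact ENNReal.ofReal_le_ofReal (hE i)
    _ = ENNReal.ofReal (∑' i, f i) := (ENNReal.ofReal_tsum_of_nonneg hf0 hf).symm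

lemma sum_densFrac_le_one {ι : Type*} {s : Finset ι} {E : ι → Set G}
    (hdisj : (s : Set ι).PairwiseDisjoint E) (hmeas : ∀ i ∈ s, MeasurableSet (E i)) :
    ∑ i ∈ s, densFrac m Φ (E i) N ≤ 1 := by
  have hsum : ∑ i ∈ s, m (E i ∩ Φ N) ≤ m (Φ N) := calc
    ∑ i ∈ s, m (E i ∩ Φ N) = m.restrict (Φ N) (⋃ i ∈ s, E i) := by
      rw [measure_biUnion_finset hdisj hmeas]
      exact Finset.sum_congr rfl fun i hi => (Measure.restrict_apply (hmeas i hi)).symm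
    _ ≤ m (Φ N) := by simpa using measure_mono (μ := m.restrict (Φ N)) (subset_univ _)
  simp only [densFrac_eq_toReal_div]
  rw [← ENNReal.toReal_sum fun i _ => measure_inter_div_ne_top (E i) (Φ N)]
  refine ENNReal.toReal_le_of_le_ofReal zero_le_one ?_
  simp only [div_eq_mul_inv, ← Finset.sum_mul, ENNReal.ofReal_one]
  exact ENNReal.div_le_of_le_mul (by rwa [one_mul])

lemma densFrac_inv [Group G] [MeasurableInv G] [m.IsInvInvariant] (E : Set G) :
    densFrac m (fun N => (Φ N)⁻¹) E⁻¹ = densFrac m Φ E := by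
  ext N
  simp only [densFrac, ← inter_inv, Measure.measure_inv]

lemma tendsto_densFrac_of_tendsto_measure_univ [IsFiniteMeasure m] (hu : m univ ≠ 0)
    (hΦ : ∀ N, MeasurableSet (Φ N))
    (h : Tendsto (fun N => (m (Φ N)).toReal) atTop (𝓝 (m univ).toReal)) (E : Set G) :
    Tendsto (densFrac m Φ E) atTop (𝓝 ((m E).toReal / (m univ).toReal)) := by
  have hlow N : (m E).toReal - ((m univ).toReal - (m (Φ N)).toReal) ≤ (m (E ∩ Φ N)).toReal := by
    have h := measure_le_inter_add_sdiff m E (Φ N)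
    grw [sdiff_subset_compl, measure_compl (hΦ N) (measure_ne_top _ _)] at h
    have := ENNReal.toReal_mono (by finiteness) h
    rw [ENNReal.toReal_add (by finiteness) (by finiteness),
      ENNReal.toReal_sub_of_le (measure_mono (subset_univ _)) (measure_ne_top _ _)] at this
    linarith
  have hlim : Tendsto (fun N => (m E).toReal - ((m univ).toReal - (m (Φ N)).toReal)) atTop
      (𝓝 (m E).toReal) := by
    have := (tendsto_const_nhds (x := (m E).toReal)).sub
      ((tendsto_const_nhds (x := (m univ).toReal)).sub h)
    rwa [sub_self, sub_zero] at this
  have hnum : Tendsto (fun N => (m (E ∩ Φ N)).toReal) atTop (𝓝 (m E).toReal) :=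
    tendsto_of_tendsto_of_tendsto_of_le_of_le hlim tendsto_const_nhds hlow
      fun N => ENNReal.toReal_mono (measure_ne_top _ _) (measure_mono inter_subset_left)
  exact hnum.div h (ENNReal.toReal_pos hu (measure_ne_top _ _)).ne'

end DensFrac

lemma exists_pairwise_disjoint_smul_of_isCompact {G : Type*} [Group G] [TopologicalSpace G]
    [IsTopologicalGroup G] [NoncompactSpace G] {C : Set G} (hC : IsCompact C) :
    ∃ g : ℕ → G, Pairwise fun i j => Disjoint (g i • C) (g j • C) := by
  obtain ⟨g, -, hg⟩ := exists_seq_of_forall_finset_exists (fun _ : G => True)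
    (fun x y => Disjoint (x • C) (y • C)) fun s _ => by
      obtain ⟨y, hy⟩ :=
        exists_disjoint_smul_of_isCompact (s.isCompact_biUnion fun x _ => hC.smul x) hC
      exact ⟨y, trivial, fun x hx => hy.mono_left (subset_biUnion_of_mem (u := (· • C)) hx)⟩
  refine ⟨g, fun i j hij => ?_⟩
  rcases hij.lt_or_gt with h | h
  exacts [hg i j h, (hg j i h).symm]

lemma lintegral_measure_inter_smul {G : Type*} [Group G] [MeasurableSpace G] [MeasurableMul₂ G]
    [MeasurableInv G] {m : Measure G} [SFinite m] [m.IsMulLeftInvariant] {s : Set G}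
    (hs : MeasurableSet s) : ∫⁻ g, m (s ∩ g • s) ∂m = m s⁻¹ * m s := by
  set S : Set (G × G) := {p | p.2 ∈ s ∧ p.1⁻¹ * p.2 ∈ s}
  have hS : MeasurableSet S :=
    (measurable_snd hs).inter (hs.preimage (measurable_fst.inv.mul measurable_snd))
  calc ∫⁻ g, m (s ∩ g • s) ∂m = m.prod m S := by
        rw [Measure.prod_apply hS]
        congr! with g
        ext x
        simp [S, mem_smul_set_iff_inv_smul_mem]
    _ = ∫⁻ x, s.indicator (fun _ => m s⁻¹) x ∂m := by
        rw [Measure.prod_apply_symm hS]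
        congr! with x
        by_cases hx : x ∈ s
        · rw [indicator_of_mem hx, ← measure_smul m x s⁻¹]
          congr! 1
          ext g
          simp [S, hx, mem_smul_set_iff_inv_smul_mem]
        · simp [S, hx]
    _ = m s⁻¹ * m s := lintegral_indicator_const hs _

section Folner

variable {G : Type*} [Group G] [TopologicalSpace G] [MeasurableSpace G] {m : Measure G}
  {Φ : ℕ → Set G}

lemma IsLeftFolner.tendsto (hΦ : IsLeftFolner m Φ) (g : G) :
    Tendsto (fun N => (m (Φ N ∩ g • Φ N)).toReal / (m (Φ N)).toReal) atTop (𝓝 1) :=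
  Metric.tendsto_atTop.2 fun ε hε => (hΦ.2.2 {g} isCompact_singleton ε hε).imp
    fun _ h N hN => by simpa [Real.dist_eq] using h N hN g rfl

lemma IsRightFolner.tendsto (hΦ : IsRightFolner m Φ) (g : G) :
    Tendsto (fun N => (m ((· * g) '' Φ N ∩ Φ N)).toReal / (m (Φ N)).toReal) atTop (𝓝 1) :=
  Metric.tendsto_atTop.2 fun ε hε => (hΦ.2.2 {g} isCompact_singleton ε hε).imp
    fun _ h N hN => by simpa [Real.dist_eq] using h N hN g rfl

lemma IsRightFolner.isLeftFolner_inv [IsTopologicalGroup G] [BorelSpace G] [m.IsInvInvariant]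
    (hΦ : IsRightFolner m Φ) : IsLeftFolner m fun N => (Φ N)⁻¹ := by
  refine ⟨fun N => (hΦ.1 N).inv, fun N => by rw [Measure.measure_inv]; exact hΦ.2.1 N,
    fun K hK ε hε => ?_⟩
  obtain ⟨N₀, h⟩ := hΦ.2.2 K⁻¹ hK.inv ε hε
  refine ⟨N₀, fun N hN g hg => ?_⟩
  have hset : (Φ N)⁻¹ ∩ g • (Φ N)⁻¹ = ((· * g⁻¹) '' Φ N ∩ Φ N)⁻¹ := by
    ext x
    simp [mem_smul_set_iff_inv_smul_mem, and_comm]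
  rw [hset, Measure.measure_inv, Measure.measure_inv]
  exact h N hN g⁻¹ (inv_mem_inv.2 hg)

variable [IsTopologicalGroup G] [T2Space G] [BorelSpace G] [IsFiniteMeasureOnCompacts m]
  [m.IsMulLeftInvariant]

lemma IsLeftFolner.eventually_densFrac_le_smul (hΦ : IsLeftFolner m Φ) (E : Set G) (g : G)
    {ε : ℝ} (hε : 0 < ε) : ∀ᶠ N in atTop, densFrac m Φ E N ≤ densFrac m Φ (g • E) N + ε := by
  filter_upwards [(hΦ.tendsto g⁻¹).eventually (lt_mem_nhds (sub_lt_self 1 hε))] with N hN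
  have hfin : m (Φ N) ≠ ∞ := (hΦ.1 N).measure_lt_top.ne
  have hr : 0 < (m (Φ N)).toReal := ENNReal.toReal_pos (hΦ.2.1 N).ne' hfin
  have htrans : m (g • E ∩ Φ N) = m (E ∩ g⁻¹ • Φ N) := by
    rw [← measure_smul m g (E ∩ _), smul_set_inter, smul_inv_smul]
  have hsplit : m (E ∩ Φ N) + m (Φ N ∩ g⁻¹ • Φ N) ≤ m (g • E ∩ Φ N) + m (Φ N) := by
    rw [htrans, ← measure_inter_add_sdiff (Φ N) ((hΦ.1 N).smul g⁻¹).measurableSet, ← add_assoc,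
      add_right_comm]
    gcongr
    calc m (E ∩ Φ N) ≤ m ((E ∩ g⁻¹ • Φ N) ∪ (Φ N \ g⁻¹ • Φ N)) :=
          measure_mono fun x ⟨hE, hx⟩ => by by_cases h : x ∈ g⁻¹ • Φ N <;> simp_all
      _ ≤ _ := measure_union_le _ _
  have hreal := ENNReal.toReal_mono (by finiteness) hsplit
  rw [ENNReal.toReal_add (by finiteness) (by finiteness),
    ENNReal.toReal_add (by finiteness) hfin] at hreal
  rw [lt_div_iff₀ hr] at hN
  unfold densFrac
  rw [div_add' _ _ _ hr.ne', div_le_div_iff_of_pos_right hr]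
  nlinarith

lemma IsLeftFolner.tendsto_densFrac_zero_of_isCompact [NoncompactSpace G]
    (hΦ : IsLeftFolner m Φ) {C : Set G} (hC : IsCompact C) :
    Tendsto (densFrac m Φ C) atTop (𝓝 0) := by
  obtain ⟨g, hg⟩ := exists_pairwise_disjoint_smul_of_isCompact hC
  -- `C` is asymptotically at most as dense as each of `k` disjoint translates of it
  have hsmall (k : ℕ) (hk : 0 < k) : ∀ᶠ N in atTop, densFrac m Φ C N ≤ 2 / k := by
    have hk' : (0 : ℝ) < k := Nat.cast_pos.2 hk
    filter_upwards [(Finset.range k).eventually_all.2 fun i _ =>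
      hΦ.eventually_densFrac_le_smul C (g i) (one_div_pos.2 hk')] with N hN
    have htotal := sum_densFrac_le_one (m := m) (Φ := Φ) (N := N) (s := Finset.range k)
      (hg.set_pairwise _) fun i _ => (hC.smul (g i)).measurableSet
    have hsum := Finset.sum_le_sum hN
    rw [Finset.sum_add_distrib] at hsum
    simp only [Finset.sum_const, Finset.card_range, nsmul_eq_mul] at hsum
    rw [le_div_iff₀ hk']
    nlinarith [mul_one_div_cancel hk'.ne']
  refine tendsto_order.2 ⟨fun a ha => Eventually.of_forall fun N => ha.trans_le
    (densFrac_nonneg C), fun a ha => ?_⟩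
  obtain ⟨k, hk⟩ := exists_nat_gt (2 / a)
  have hk0 : 0 < k := Nat.cast_pos.1 ((div_pos two_pos ha).trans hk)
  filter_upwards [hsmall k hk0] with N hN
  exact hN.trans_lt ((div_lt_iff₀ (Nat.cast_pos.2 hk0)).2 (by rwa [div_lt_iff₀ ha, mul_comm] at hk))

lemma IsLeftFolner.tendsto_measure_univ [SecondCountableTopology G] [CompactSpace G]
    [m.IsOpenPosMeasure] [m.IsInvInvariant] (hΦ : IsLeftFolner m Φ) :
    Tendsto (fun N => (m (Φ N)).toReal) atTop (𝓝 (m univ).toReal) := by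
  set u := (m univ).toReal
  have hu : 0 < u :=
    ENNReal.toReal_pos (isOpen_univ.measure_pos m univ_nonempty).ne' (measure_ne_top _ _)
  -- average `(1 - ε) m (Φ N) ≤ m (Φ N ∩ g • Φ N)` over `g ∈ G`
  have hlow (ε : ℝ) (hε : 0 < ε) : ∀ᶠ N in atTop, (1 - ε) * u ≤ (m (Φ N)).toReal := by
    obtain ⟨N₀, hN₀⟩ := hΦ.2.2 univ isCompact_univ ε hε
    filter_upwards [eventually_ge_atTop N₀] with N hN
    set r := (m (Φ N)).toReal
    have hr : 0 < r := ENNReal.toReal_pos (hΦ.2.1 N).ne' (measure_ne_top _ _)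
    have hg (g : G) : ENNReal.ofReal ((1 - ε) * r) ≤ m (Φ N ∩ g • Φ N) := by
      refine ENNReal.ofReal_le_of_le_toReal ?_
      have h := (abs_lt.1 (hN₀ N hN g (mem_univ g))).1
      rw [neg_lt_sub_iff_lt_add, add_comm, ← sub_lt_iff_lt_add, lt_div_iff₀ hr] at h
      exact h.le
    have hint : ENNReal.ofReal ((1 - ε) * r) * m univ ≤ m (Φ N) * m (Φ N) := calc
      _ = ∫⁻ _, ENNReal.ofReal ((1 - ε) * r) ∂m := (lintegral_const _).symm
      _ ≤ ∫⁻ g, m (Φ N ∩ g • Φ N) ∂m := lintegral_mono hg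
      _ = m (Φ N) * m (Φ N) := by
        rw [lintegral_measure_inter_smul (hΦ.1 N).measurableSet, Measure.measure_inv]
    have hreal := ENNReal.toReal_mono (by finiteness) hint
    rw [ENNReal.toReal_mul, ENNReal.toReal_mul, ENNReal.toReal_ofReal'] at hreal
    nlinarith [le_max_left ((1 - ε) * r) 0]
  refine Metric.tendsto_nhds.2 fun δ hδ => ?_
  filter_upwards [hlow (δ / (2 * u)) (by positivity)] with N hN
  have hle : (m (Φ N)).toReal ≤ u :=
    ENNReal.toReal_mono (measure_ne_top _ _) (measure_mono (subset_univ _))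
  have : (1 - δ / (2 * u)) * u = u - δ / 2 := by field_simp
  rw [Real.dist_eq, abs_sub_lt_iff]
  constructor <;> linarith

end Folner

section Haar

open Measure

variable {G : Type*} [Group G] [TopologicalSpace G] [IsTopologicalGroup G]
  [LocallyCompactSpace G] [SecondCountableTopology G] [MeasurableSpace G] [BorelSpace G]
  {m : Measure G} [m.IsHaarMeasure] {Φ : ℕ → Set G}

lemma measure_preimage_mul_right_eq_modularCharacterFun_mul (g : G) {s : Set G}
    (hs : MeasurableSet s) : m ((· * g) ⁻¹' s) = modularCharacterFun g * m s := by
  rw [← map_apply (measurable_mul_const g) hs, map_right_mul_eq_modularCharacterFun_smul m g]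
  rfl

lemma isMulRightInvariant_of_one_le_modularCharacterFun
    (h : ∀ g : G, 1 ≤ modularCharacterFun g) : m.IsMulRightInvariant := by
  have h1 (g : G) : modularCharacterFun g = 1 := by
    refine le_antisymm ?_ (h g)
    calc modularCharacterFun g ≤ modularCharacterFun g * modularCharacterFun g⁻¹ :=
          le_mul_of_one_le_right' (h _)
      _ = 1 := by rw [← modularCharacterFun_map_mul, mul_inv_cancel, modularCharacterFun_map_one]
  refine ⟨fun g => ?_⟩
  rw [map_right_mul_eq_modularCharacterFun_smul m g, h1, one_smul]

lemma isMulRightInvariant_of_compactSpace [CompactSpace G] : m.IsMulRightInvariant :=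
  isMulRightInvariant_of_one_le_modularCharacterFun fun g => by
    have h := measure_preimage_mul_right_eq_modularCharacterFun_mul (m := m) g MeasurableSet.univ
    rw [preimage_univ, ← one_mul (m univ), ← mul_assoc, mul_one] at h
    rw [ENNReal.mul_left_inj (NeZero.ne _) (measure_ne_top _ _), eq_comm, ENNReal.coe_eq_one] at h
    exact h.ge

lemma IsRightFolner.isMulRightInvariant [T2Space G] (hΦ : IsRightFolner m Φ) :
    m.IsMulRightInvariant :=
  isMulRightInvariant_of_one_le_modularCharacterFun fun g => by
    have hle N :
        (m ((· * g⁻¹) '' Φ N ∩ Φ N)).toReal / (m (Φ N)).toReal ≤ modularCharacterFun g := by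
      have hr := ENNReal.toReal_pos (hΦ.2.1 N).ne' (hΦ.1 N).measure_lt_top.ne
      rw [div_le_iff₀ hr]
      calc (m ((· * g⁻¹) '' Φ N ∩ Φ N)).toReal ≤ (m ((· * g⁻¹) '' Φ N)).toReal :=
            ENNReal.toReal_mono ((hΦ.1 N).image (continuous_mul_const _)).measure_lt_top.ne
              (measure_mono inter_subset_left)
        _ = modularCharacterFun g * (m (Φ N)).toReal := by
            rw [image_mul_right', measure_preimage_mul_right_eq_modularCharacterFun_mul g
              (hΦ.1 N).measurableSet, ENNReal.toReal_mul]
            rfl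
    exact_mod_cast le_of_tendsto' (hΦ.tendsto g⁻¹) hle

lemma isInvInvariant_of_isMulRightInvariant [m.IsMulRightInvariant] : m.IsInvInvariant := by
  obtain ⟨c, hc⟩ : ∃ c : ℝ≥0, m.inv = c • m := ⟨_, isMulLeftInvariant_eq_smul m.inv m⟩
  have hcs (s : Set G) : m s⁻¹ = c * m s := by rw [← inv_apply, hc]; rfl
  obtain ⟨K⟩ : Nonempty (TopologicalSpace.PositiveCompacts G) := inferInstance
  have hK : m K = c * c * m K := by rw [mul_assoc, ← hcs, ← hcs, inv_inv]
  rw [eq_comm, ← one_mul (m K), ← mul_assoc, mul_one, ENNReal.mul_left_inj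
    (measure_pos_of_nonempty_interior m K.interior_nonempty).ne' K.isCompact.measure_lt_top.ne,
    ← ENNReal.coe_mul, ENNReal.coe_eq_one] at hK
  have hc1 : c = 1 := by
    have : (c : ℝ) * c = 1 := by exact_mod_cast hK
    exact NNReal.coe_eq_one.1 (by nlinarith [c.coe_nonneg])
  exact ⟨by rw [hc, hc1, one_smul]⟩

lemma tendsto_densFrac_zero_of_isCompact [T2Space G] [NoncompactSpace G]
    (hΦ : IsLeftFolner m Φ ∨ IsRightFolner m Φ) {C : Set G} (hC : IsCompact C) :
    Tendsto (densFrac m Φ C) atTop (𝓝 0) := by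
  rcases hΦ with hΦ | hΦ
  · exact hΦ.tendsto_densFrac_zero_of_isCompact hC
  · have := hΦ.isMulRightInvariant
    have := isInvInvariant_of_isMulRightInvariant (m := m)
    simpa only [densFrac_inv] using hΦ.isLeftFolner_inv.tendsto_densFrac_zero_of_isCompact hC.inv

lemma tendsto_densFrac_of_compactSpace [T2Space G] [CompactSpace G]
    (hΦ : IsLeftFolner m Φ ∨ IsRightFolner m Φ) (E : Set G) :
    Tendsto (densFrac m Φ E) atTop (𝓝 ((m E).toReal / (m univ).toReal)) := by
  have := isMulRightInvariant_of_compactSpace (m := m)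
  have := isInvInvariant_of_isMulRightInvariant (m := m)
  rcases hΦ with hΦ | hΦ
  · exact tendsto_densFrac_of_tendsto_measure_univ (NeZero.ne _)
      (fun N => (hΦ.1 N).measurableSet) hΦ.tendsto_measure_univ E
  · have hΨ := hΦ.isLeftFolner_inv
    simpa only [densFrac_inv, Measure.measure_inv] using
      tendsto_densFrac_of_tendsto_measure_univ (NeZero.ne _)
        (fun N => (hΨ.1 N).measurableSet) hΨ.tendsto_measure_univ E⁻¹

end Haar

section Removal

variable {G : Type*} [MeasurableSpace G] {m : Measure G} {Φ : ℕ → Set G}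

lemma exists_tendsto_of_tendsto_densFrac_accumulate {A : ℕ → Set G} {b : ℕ → ℝ}
    (hb : ∀ n, Tendsto (densFrac m Φ (accumulate A n)) atTop (𝓝 (b n))) :
    ∃ L, Tendsto b atTop (𝓝 L) ∧ ∀ n, b n ≤ L := by
  have hmono : Monotone b := monotone_nat_of_le_succ fun n =>
    le_of_tendsto_of_tendsto' (hb n) (hb (n + 1))
      fun N => densFrac_mono (monotone_accumulate n.le_succ)
  have hbdd : BddAbove (range b) :=
    ⟨1, forall_mem_range.2 fun n => le_of_tendsto' (hb n) fun N => densFrac_le_one _⟩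
  exact ⟨⨆ n, b n, tendsto_atTop_ciSup hmono hbdd, le_ciSup hbdd⟩

lemma tendsto_measure_iUnion_div_of_tendsto_densFrac [IsFiniteMeasure m]
    (hΦ : ∀ E, Tendsto (densFrac m Φ E) atTop (𝓝 ((m E).toReal / (m univ).toReal)))
    {A : ℕ → Set G} {b : ℕ → ℝ}
    (hb : ∀ n, Tendsto (densFrac m Φ (accumulate A n)) atTop (𝓝 (b n))) :
    Tendsto b atTop (𝓝 ((m (⋃ i, A i)).toReal / (m univ).toReal)) := by
  have hbn n : b n = (m (accumulate A n)).toReal / (m univ).toReal :=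
    tendsto_nhds_unique (hb n) (hΦ _)
  have hmeas := tendsto_measure_iUnion_atTop (μ := m) (monotone_accumulate (s := A))
  rw [iUnion_accumulate] at hmeas
  rw [show b = _ from funext hbn]
  exact ((ENNReal.tendsto_toReal (measure_ne_top _ _)).comp hmeas).div_const _

variable [TopologicalSpace G]

lemma exists_isCompact_forall_densFrac_sdiff_le (hΦ : ∀ N, IsCompact (Φ N)) {E : Set G}
    {c : ℝ} (hE : ∀ᶠ N in atTop, densFrac m Φ E N ≤ c) :
    ∃ T, IsCompact T ∧ ∀ N, densFrac m Φ (E \ T) N ≤ c := by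
  obtain ⟨M, hM⟩ := eventually_atTop.1 hE
  have hc : 0 ≤ c := (densFrac_nonneg E).trans (hM M le_rfl)
  refine ⟨accumulate Φ M, isCompact_accumulate hΦ M, fun N => ?_⟩
  rcases le_or_gt N M with hN | hN
  · have : (E \ accumulate Φ M) ∩ Φ N = ∅ :=
      eq_empty_of_forall_notMem fun x hx => hx.1.2 (mem_accumulate.2 ⟨N, hN, hx.2⟩)
    simp [densFrac, this, hc]
  · exact (densFrac_mono sdiff_subset).trans (hM N hN.le)

lemma tendsto_densFrac_iUnion_sdiff
    (hzero : ∀ C, IsCompact C → Tendsto (densFrac m Φ C) atTop (𝓝 0))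
    {A T : ℕ → Set G} (hT : ∀ i, IsCompact (T i)) {f : ℕ → ℝ} (hf : Summable f)
    (hAT : ∀ i N, densFrac m Φ (A i \ T i) N ≤ f i) {b : ℕ → ℝ} {L : ℝ}
    (hb : ∀ n, Tendsto (densFrac m Φ (accumulate A n)) atTop (𝓝 (b n)))
    (hbL : Tendsto b atTop (𝓝 L)) (hbL' : ∀ n, b n ≤ L) :
    Tendsto (densFrac m Φ (⋃ i, A i \ T i)) atTop (𝓝 L) := by
  -- the first `n` sets lose only the compact, hence density-zero, set `accumulate T n`
  have hlower n N : densFrac m Φ (accumulate A n) N - densFrac m Φ (accumulate T n) N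
      ≤ densFrac m Φ (⋃ i, A i \ T i) N := by
    refine sub_le_iff_le_add.2 ((densFrac_mono fun x hx => ?_).trans (densFrac_union_le _ _))
    obtain ⟨i, hi, hxA⟩ := mem_accumulate.1 hx
    by_cases hxT : x ∈ T i
    · exact Or.inr (mem_accumulate.2 ⟨i, hi, hxT⟩)
    · exact Or.inl (mem_iUnion.2 ⟨i, hxA, hxT⟩)
  have hupper k N : densFrac m Φ (⋃ i, A i \ T i) N
      ≤ densFrac m Φ (accumulate A k) N + ∑' j, f (j + (k + 1)) := by
    refine (densFrac_mono fun x hx => ?_).trans ((densFrac_union_le _ _).trans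
      (add_le_add le_rfl (densFrac_iUnion_le ((summable_nat_add_iff _).2 hf) fun j => hAT _ N)))
    obtain ⟨i, hxA⟩ := mem_iUnion.1 hx
    rcases le_or_gt i k with hik | hik
    · exact Or.inl (mem_accumulate.2 ⟨i, hik, hxA.1⟩)
    · exact Or.inr (mem_iUnion.2 ⟨i - (k + 1), by rwa [Nat.sub_add_cancel hik]⟩)
  refine tendsto_order.2 ⟨fun a ha => ?_, fun a ha => ?_⟩
  · obtain ⟨n, hn⟩ := (hbL.eventually (lt_mem_nhds ha)).exists
    have hlim := (hb n).sub (hzero _ (isCompact_accumulate hT n))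
    rw [sub_zero] at hlim
    filter_upwards [hlim.eventually (lt_mem_nhds hn)] with N hN
    exact hN.trans_le (hlower n N)
  · obtain ⟨k, hk⟩ := ((tendsto_sum_nat_add fun j => f (j + 1)).eventually
      (gt_mem_nhds (sub_pos.2 ha))).exists
    simp only [add_assoc] at hk
    filter_upwards [(hb k).eventually (gt_mem_nhds (show b k < a - ∑' j, f (j + (k + 1)) by
      linarith [hbL' k]))] with N hN
    linarith [hupper k N]

end Removal

theorem statement19_general {G : Type} [Group G] [TopologicalSpace G] [IsTopologicalGroup G]
    [LocallyCompactSpace G] [SecondCountableTopology G] [T2Space G]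
    [MeasurableSpace G] [BorelSpace G]
    (m : Measure G) [m.IsHaarMeasure]
    (Φ : ℕ → Set G) (hΦ : IsLeftFolner m Φ ∨ IsRightFolner m Φ)
    (A : ℕ → Set G)
    (d : ℕ → ℝ) (hd : ∀ i, Tendsto (densFrac m Φ (A i)) atTop (nhds (d i)))
    (hsum : Summable d)
    (b : ℕ → ℝ)
    (hb : ∀ n, Tendsto (densFrac m Φ (Set.accumulate A n)) atTop (nhds (b n))) :
    ∃ A' : ℕ → Set G,
      (∀ i, A' i ⊆ A i) ∧
      (∀ i, ∃ K : Set G, IsCompact K ∧ A i \ A' i ⊆ K) ∧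
      ∃ L : ℝ, Tendsto b atTop (nhds L) ∧
        Tendsto (densFrac m Φ (⋃ i, A' i)) atTop (nhds L) := by
  by_cases hG : CompactSpace G
  · exact ⟨A, fun i => subset_rfl, fun i => ⟨∅, isCompact_empty, by simp⟩, _,
      tendsto_measure_iUnion_div_of_tendsto_densFrac (tendsto_densFrac_of_compactSpace hΦ) hb,
      tendsto_densFrac_of_compactSpace hΦ _⟩
  have : NoncompactSpace G := not_compactSpace_iff.1 hG
  have hT i : ∃ T, IsCompact T ∧ ∀ N, densFrac m Φ (A i \ T) N ≤ d i + (1 / 2) ^ i :=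
    exists_isCompact_forall_densFrac_sdiff_le (hΦ.elim (·.1) (·.1))
      ((hd i).eventually (eventually_le_nhds (lt_add_of_pos_right _ (by positivity))))
  choose T hTc hAT using hT
  obtain ⟨L, hbL, hbL'⟩ := exists_tendsto_of_tendsto_densFrac_accumulate hb
  refine ⟨fun i => A i \ T i, fun i => sdiff_subset,
    fun i => ⟨T i, hTc i, by rw [sdiff_sdiff_right_self]; exact inter_subset_right⟩, L, hbL, ?_⟩
  exact tendsto_densFrac_iUnion_sdiff (fun C hC => tendsto_densFrac_zero_of_isCompact hΦ hC)
    hTc (hsum.add summable_geometric_two) hAT hb hbL hbL'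

/-- Approximate monotone convergence for Følner densities: if each `A i`
has density `d i` with `d` summable and each partial union `A 0 ∪ ⋯ ∪ A n` has density
`b n`, then one can remove from each `A i` a set contained in a compact set so that the
union of the resulting sets `A' i` has density equal to `lim b`. -/
theorem statement19 {G : Type} [Group G] [TopologicalSpace G] [IsTopologicalGroup G]
    [LocallyCompactSpace G] [SecondCountableTopology G] [T2Space G]
    [MeasurableSpace G] [BorelSpace G]
    (m : Measure G) [m.IsHaarMeasure]
    (hAmen : HasLeftInvariantMean G)
    (Φ : ℕ → Set G) (hΦ : IsLeftFolner m Φ ∨ IsRightFolner m Φ)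
    (A : ℕ → Set G) (hA : ∀ i, MeasurableSet (A i))
    (d : ℕ → ℝ) (hd : ∀ i, Tendsto (densFrac m Φ (A i)) atTop (nhds (d i)))
    (hsum : Summable d)
    (b : ℕ → ℝ)
    (hb : ∀ n, Tendsto (densFrac m Φ (Set.accumulate A n)) atTop (nhds (b n))) :
    ∃ A' : ℕ → Set G,
      (∀ i, A' i ⊆ A i) ∧
      (∀ i, ∃ K : Set G, IsCompact K ∧ A i \ A' i ⊆ K) ∧
      ∃ L : ℝ, Tendsto b atTop (nhds L) ∧
        Tendsto (densFrac m Φ (⋃ i, A' i)) atTop (nhds L) :=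
  statement19_general m Φ hΦ A d hd hsum b hb
end
end
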